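/- arXiv:2202.10334 — 10 statements merged into one kernel-verified Lean document; each statement's English description precedes it below -/
import Mathlib

section
/- For each pair of positive integers (p,q), the scattering polynomial φ^{(p,q)}(z) = Σ_{j=1}^{min(p,q)} C(p,j)·C(q-1,j-1)·z^{p-j}·(-conj(z))^{q-j}·(1-z·conj(z))^j satisfies the eigenvalue equation -(1-z·conj(z))·∂²φ/∂conj(z)∂z = pq·φ on the open unit disk. -/
/-!
Write `φ^{(p,q)} = ∑ c_j E_j` with `E_j = z^(p-j) (-w)^(q-j) (1 - z w)^j` and `w` in place of
`conj z`. Differentiating the three factors gives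
`-(1 - z w) ∂_w ∂_z E_j = (p-j)(q-j) E_{j+1} + j(p+q+1-2j) E_j + j(j-1) E_{j-1}`,
and the coefficients satisfy `c_{j+1} (j+1) j = c_j (p-j)(q-j)`. Hence the `j`-th term equals
`pq c_j E_j` plus the difference `Ψ_j - Ψ_{j-1}` of the potential
`Ψ_n = c_{n+1} (n+1) n (E_{n+1} - E_n)`, and these differences telescope to
`Ψ_{min p q} - Ψ_0 = 0`.
-/

open Finset

theorem Finset.sum_Icc_one_sub_pred {M : Type*} [AddCommGroup M] (f : ℕ → M) (n : ℕ) :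
    ∑ j ∈ Icc 1 n, (f j - f (j - 1)) = f n - f 0 := by
  induction n with
  | zero => simp
  | succ n ih => rw [sum_Icc_succ_top (by omega), ih, Nat.add_sub_cancel]; abel

section Calculus

variable {𝕜 : Type*} [NontriviallyNormedField 𝕜]

/-- For `f` a polynomial in `z` and `w`, `mixedDeriv f z (conj z)` is the Wirtinger derivative
`∂²/∂conj(z)∂z` of `z ↦ f z (conj z)`. -/
noncomputable def mixedDeriv (f : 𝕜 → 𝕜 → 𝕜) (z w : 𝕜) : 𝕜 :=
  deriv (fun w' => deriv (fun z' => f z' w') z) w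

theorem mixedDeriv_sum {ι : Type*} (s : Finset ι) (c : ι → 𝕜) (f : ι → 𝕜 → 𝕜 → 𝕜) (z w : 𝕜)
    (hz : ∀ i ∈ s, ∀ w', DifferentiableAt 𝕜 (fun z' => f i z' w') z)
    (hw : ∀ i ∈ s, DifferentiableAt 𝕜 (fun w' => deriv (fun z' => f i z' w') z) w) :
    mixedDeriv (fun z w => ∑ i ∈ s, c i * f i z w) z w = ∑ i ∈ s, c i * mixedDeriv (f i) z w := by
  have inner : (fun w' => deriv (fun z' => ∑ i ∈ s, c i * f i z' w') z)
      = fun w' => ∑ i ∈ s, c i * deriv (fun z' => f i z' w') z := by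
    funext w'
    rw [deriv_fun_sum fun i hi => (hz i hi w').const_mul (c i)]
    exact sum_congr rfl fun i hi => deriv_const_mul _ (hz i hi w')
  rw [mixedDeriv, inner, deriv_fun_sum fun i hi => (hw i hi).const_mul (c i)]
  exact sum_congr rfl fun i hi => deriv_const_mul _ (hw i hi)

noncomputable def zwMonomial (a b k : ℕ) (z w : 𝕜) : 𝕜 := z ^ a * (-w) ^ b * (1 - z * w) ^ k

theorem hasDerivAt_zwMonomial_fst (a b k : ℕ) (z w : 𝕜) :
    HasDerivAt (fun z' => zwMonomial a b k z' w)
      (a * zwMonomial (a - 1) b k z w + k * zwMonomial a (b + 1) (k - 1) z w) z := by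
  have hu : HasDerivAt (fun z' : 𝕜 => 1 - z' * w) (-w) z := by
    simpa using ((hasDerivAt_id z).mul_const w).const_sub 1
  refine (((hasDerivAt_pow a z).mul_const ((-w) ^ b)).fun_mul (hu.fun_pow k)).congr_deriv ?_
  simp only [zwMonomial, pow_succ]
  ring

theorem hasDerivAt_zwMonomial_snd (a b k : ℕ) (z w : 𝕜) :
    HasDerivAt (fun w' => zwMonomial a b k z w')
      (-(b * zwMonomial a (b - 1) k z w + k * zwMonomial (a + 1) b (k - 1) z w)) w := by
  have hu : HasDerivAt (fun w' : 𝕜 => 1 - z * w') (-z) w := by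
    simpa using ((hasDerivAt_id w).const_mul z).const_sub 1
  refine ((((hasDerivAt_neg w).fun_pow b).const_mul (z ^ a)).fun_mul
    (hu.fun_pow k)).congr_deriv ?_
  simp only [zwMonomial]
  ring

theorem hasDerivAt_deriv_zwMonomial_fst (a b k : ℕ) (z w : 𝕜) :
    HasDerivAt (fun w' => deriv (fun z' => zwMonomial a b k z' w') z)
      (-(a * (b * zwMonomial (a - 1) (b - 1) k z w + k * zwMonomial a b (k - 1) z w)
        + k * ((b + 1) * zwMonomial a b (k - 1) z w
          + (k - 1 : ℕ) * zwMonomial (a + 1) (b + 1) (k - 1 - 1) z w))) w := by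
  simp_rw [(hasDerivAt_zwMonomial_fst a b k z _).deriv]
  refine (((hasDerivAt_zwMonomial_snd _ _ _ z w).const_mul _).add
    ((hasDerivAt_zwMonomial_snd _ _ _ z w).const_mul _)).congr_deriv ?_
  rcases a with _ | a <;> simp only [Nat.add_sub_cancel] <;> push_cast <;> ring

theorem neg_one_sub_mul_mixedDeriv_zwMonomial (a b k : ℕ) (z w : 𝕜) :
    -(1 - z * w) * mixedDeriv (zwMonomial a b k) z w
      = a * b * zwMonomial (a - 1) (b - 1) (k + 1) z w + k * (a + b + 1) * zwMonomial a b k z w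
        + k * (k - 1) * zwMonomial (a + 1) (b + 1) (k - 1) z w := by
  rw [mixedDeriv, (hasDerivAt_deriv_zwMonomial_fst a b k z w).deriv]
  rcases k with _ | _ | k <;>
    simp only [zwMonomial, Nat.add_sub_cancel, Nat.zero_sub, Nat.sub_self, pow_succ, pow_zero] <;>
    push_cast <;> ring

end Calculus

def scatteringCoeff (p q j : ℕ) : ℕ := p.choose j * (q - 1).choose (j - 1)

theorem scatteringCoeff_succ_mul (p q j : ℕ) (hj : 1 ≤ j) :
    scatteringCoeff p q (j + 1) * ((j + 1) * j)
      = scatteringCoeff p q j * ((p - j) * (q - j)) := by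
  obtain ⟨i, rfl⟩ := Nat.exists_eq_add_of_le' hj
  have hp := Nat.choose_succ_right_eq p (i + 1)
  have hq := Nat.choose_succ_right_eq (q - 1) i
  rw [Nat.sub_sub, Nat.add_comm 1 i] at hq
  simp only [scatteringCoeff, Nat.add_sub_cancel]
  calc p.choose (i + 1 + 1) * (q - 1).choose (i + 1) * ((i + 1 + 1) * (i + 1))
      = (p.choose (i + 1 + 1) * (i + 1 + 1)) * ((q - 1).choose (i + 1) * (i + 1)) := by ring
    _ = _ := by rw [hp, hq]; ring

theorem scatteringCoeff_min_succ_mul_min (p q : ℕ) :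
    scatteringCoeff p q (min p q + 1) * min p q = 0 := by
  rcases le_total p q with h | h
  · simp [min_eq_left h, scatteringCoeff]
  · rcases q with _ | q
    · simp
    · simp [min_eq_right h, scatteringCoeff]

section Scattering

variable {𝕜 : Type*} [NontriviallyNormedField 𝕜]

noncomputable def scatteringPoly (p q : ℕ) (z w : 𝕜) : 𝕜 :=
  ∑ j ∈ Icc 1 (min p q), (scatteringCoeff p q j : 𝕜) * zwMonomial (p - j) (q - j) j z w

noncomputable def scatteringPotential (p q : ℕ) (z w : 𝕜) (n : ℕ) : 𝕜 :=
  scatteringCoeff p q (n + 1) * ((n + 1) * n)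
    * (zwMonomial (p - (n + 1)) (q - (n + 1)) (n + 1) z w - zwMonomial (p - n) (q - n) n z w)

theorem scatteringCoeff_mul_neg_one_sub_mul_mixedDeriv (p q j : ℕ) (hj : 1 ≤ j) (hjp : j ≤ p)
    (hjq : j ≤ q) (z w : 𝕜) :
    scatteringCoeff p q j * (-(1 - z * w) * mixedDeriv (zwMonomial (p - j) (q - j) j) z w)
      = p * q * (scatteringCoeff p q j * zwMonomial (p - j) (q - j) j z w)
        + (scatteringPotential p q z w j - scatteringPotential p q z w (j - 1)) := by
  have hc : (scatteringCoeff p q (j + 1) * ((j + 1) * j) : 𝕜)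
      = scatteringCoeff p q j * ((p - j) * (q - j)) := by
    exact_mod_cast congrArg (Nat.cast : ℕ → 𝕜) (scatteringCoeff_succ_mul p q j hj)
  obtain ⟨i, rfl⟩ := Nat.exists_eq_add_of_le' hj
  rw [neg_one_sub_mul_mixedDeriv_zwMonomial, scatteringPotential, scatteringPotential,
    Nat.add_sub_cancel, Nat.sub_sub, Nat.sub_sub, show p - (i + 1) + 1 = p - i by omega,
    show q - (i + 1) + 1 = q - i by omega]
  push_cast [Nat.cast_sub hjp, Nat.cast_sub hjq] at hc ⊢
  linear_combination (zwMonomial (p - (i + 1)) (q - (i + 1)) (i + 1) z w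
    - zwMonomial (p - (i + 1 + 1)) (q - (i + 1 + 1)) (i + 1 + 1) z w) * hc

theorem neg_one_sub_mul_mixedDeriv_scatteringPoly (p q : ℕ) (z w : 𝕜) :
    -(1 - z * w) * mixedDeriv (scatteringPoly p q) z w = p * q * scatteringPoly p q z w := by
  have hz (j : ℕ) (_ : j ∈ Icc 1 (min p q)) (w' : 𝕜) :
      DifferentiableAt 𝕜 (fun z' => zwMonomial (p - j) (q - j) j z' w') z :=
    (hasDerivAt_zwMonomial_fst _ _ _ z w').differentiableAt
  have hw (j : ℕ) (_ : j ∈ Icc 1 (min p q)) :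
      DifferentiableAt 𝕜 (fun w' => deriv (fun z' => zwMonomial (p - j) (q - j) j z' w') z) w :=
    (hasDerivAt_deriv_zwMonomial_fst _ _ _ z w).differentiableAt
  have hterm (j : ℕ) (hj : j ∈ Icc 1 (min p q)) :=
    scatteringCoeff_mul_neg_one_sub_mul_mixedDeriv p q j (mem_Icc.1 hj).1
      ((mem_Icc.1 hj).2.trans (min_le_left p q)) ((mem_Icc.1 hj).2.trans (min_le_right p q)) z w
  have hΨ : scatteringPotential p q z w (min p q) = 0 := by
    have h := congrArg (Nat.cast : ℕ → 𝕜) (scatteringCoeff_min_succ_mul_min p q)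
    push_cast at h
    rw [scatteringPotential]
    linear_combination ((min p q + 1 : 𝕜)
      * (zwMonomial (p - (min p q + 1)) (q - (min p q + 1)) (min p q + 1) z w
        - zwMonomial (p - min p q) (q - min p q) (min p q) z w)) * h
  unfold scatteringPoly
  rw [mixedDeriv_sum _ _ _ z w hz hw, mul_sum, mul_sum]
  simp_rw [mul_left_comm (-(1 - z * w))]
  rw [sum_congr rfl hterm, sum_add_distrib, sum_Icc_one_sub_pred, hΨ]
  simp [scatteringPotential]

end Scattering

theorem scattering_polynomial_eigenfunction_general (p q : ℕ)
    (F : ℂ → ℂ → ℂ)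
    (hF : ∀ z w : ℂ, F z w = ∑ j ∈ Finset.Icc 1 (min p q),
      (p.choose j : ℂ) * ((q - 1).choose (j - 1) : ℂ)
        * z ^ (p - j) * (-w) ^ (q - j) * (1 - z * w) ^ j)
    (z : ℂ) :
    -(1 - z * (starRingEnd ℂ) z)
        * deriv (fun w : ℂ => deriv (fun z' : ℂ => F z' w) z) ((starRingEnd ℂ) z)
      = (p : ℂ) * (q : ℂ) * F z ((starRingEnd ℂ) z) := by
  obtain rfl : F = scatteringPoly p q := by
    funext z w
    rw [hF, scatteringPoly]
    refine sum_congr rfl fun j _ => ?_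
    simp only [scatteringCoeff, zwMonomial]
    push_cast
    ring
  exact neg_one_sub_mul_mixedDeriv_scatteringPoly p q z _

/-- The scattering polynomial `φ^{(p,q)}`, viewed as a function `F(z,w)` of two independent
complex variables with `w` standing for `conj z`, satisfies the eigenvalue equation
`-(1 - z conj(z)) ∂²F/∂w∂z = pq · F` on the open unit disk (the Wirtinger derivatives of a
polynomial in `z` and `conj z` being the complex partial derivatives in the two slots). -/
theorem scattering_polynomial_eigenfunction (p q : ℕ) (hp : 1 ≤ p) (hq : 1 ≤ q)
    (F : ℂ → ℂ → ℂ)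
    (hF : ∀ z w : ℂ, F z w = ∑ j ∈ Finset.Icc 1 (min p q),
      (p.choose j : ℂ) * ((q - 1).choose (j - 1) : ℂ)
        * z ^ (p - j) * (-w) ^ (q - j) * (1 - z * w) ^ j)
    (z : ℂ) (hz : ‖z‖ < 1) :
    -(1 - z * (starRingEnd ℂ) z)
        * deriv (fun w : ℂ => deriv (fun z' : ℂ => F z' w) z) ((starRingEnd ℂ) z)
      = (p : ℂ) * (q : ℂ) * F z ((starRingEnd ℂ) z) :=
  scattering_polynomial_eigenfunction_general p q F hF z
end

section
/- For positive integers p, q with z in the closed unit disk, the two expressions ((-1)^p / (q·(p+q-1)!))·(1-z·conj(z))·∂^{p+q}/(∂conj(z)^p ∂z^q)[(1-z·conj(z))^{p+q-1}] and Σ_{j=1}^{min(p,q)} C(p,j)·C(q-1,j-1)·z^{p-j}·(-conj(z))^{q-j}·(1-z·conj(z))^j are equal. -/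
open Finset

/-! Treat `z` and `w = z̄` as independent variables. The `q`-fold `z`-derivative of
`(1 - z w)^(p+q-1)` is `D (-w)^q (1 - z w)^(p-1)` with `D = (p+q-1)(p+q-2)⋯p`.
By the Leibniz rule, the `p`-fold `w`-derivative of `w^q (1 - z w)^(p-1)` is a sum over the
number `j` of derivatives falling on `w^q`; the term vanishes unless `1 ≤ j ≤ min p q`, and then
the three falling factorials multiply to `q (p+q-1)! C(q-1, j-1)`, which cancels the normalising
constant. -/

theorem iteratedDeriv_const_sub_mul_pow {𝕜 : Type*} [NontriviallyNormedField 𝕜]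
    (a b : 𝕜) (n k : ℕ) (x : 𝕜) :
    iteratedDeriv k (fun x => (a - b * x) ^ n) x
      = n.descFactorial k * (-b) ^ k * (a - b * x) ^ (n - k) := by
  have hcomp := iteratedDeriv_comp_const_mul (n := k) (f := fun y => (a - y) ^ n)
    (by fun_prop) b
  have hsub := iteratedDeriv_comp_const_sub k (fun y : 𝕜 => y ^ n) a
  rw [hcomp, hsub]
  simp only [iteratedDeriv_pow, smul_eq_mul, neg_pow b]
  ring

theorem iteratedDeriv_pow_mul_sub_mul_pow_pred {𝕜 : Type*} [NontriviallyNormedField 𝕜]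
    (a b : 𝕜) {n : ℕ} (hn : 1 ≤ n) (q : ℕ) (x : 𝕜) :
    iteratedDeriv n (fun w => w ^ q * (a - b * w) ^ (n - 1)) x
      = ∑ j ∈ Icc 1 (min n q), n.choose j * (q.descFactorial j * x ^ (q - j))
          * ((n - 1).descFactorial (n - j) * (-b) ^ (n - j) * (a - b * x) ^ (j - 1)) := by
  rw [iteratedDeriv_fun_mul (by fun_prop) (by fun_prop)]
  simp only [iteratedDeriv_pow, iteratedDeriv_const_sub_mul_pow]
  have hsub : Icc 1 (min n q) ⊆ range (n + 1) := fun j hj => by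
    simp only [mem_Icc, mem_range] at hj ⊢
    omega
  rw [← sum_subset hsub]
  · refine sum_congr rfl fun j hj => ?_
    rw [show n - 1 - (n - j) = j - 1 by grind]
  · intro j _ hj
    rcases Nat.eq_zero_or_pos j with rfl | hj0
    · simp [Nat.descFactorial_eq_zero_iff_lt.mpr (show n - 1 < n by omega)]
    · have hqj : q < j := by grind
      simp [Nat.descFactorial_eq_zero_iff_lt.mpr hqj]

theorem Nat.descFactorial_mul_descFactorial_mul_descFactorial {p q j : ℕ} (hj : 1 ≤ j)
    (hjp : j ≤ p) (hjq : j ≤ q) :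
    (p + q - 1).descFactorial q * q.descFactorial j * (p - 1).descFactorial (p - j)
      = q * (q - 1).choose (j - 1) * (p + q - 1).factorial := by
  obtain ⟨i, rfl⟩ := Nat.exists_eq_add_of_le' hj
  obtain ⟨m, rfl⟩ := Nat.exists_eq_add_of_le' (show 1 ≤ p by omega)
  obtain ⟨r, rfl⟩ := Nat.exists_eq_add_of_le' (show 1 ≤ q by omega)
  have hm : m + 1 - (i + 1) = m - i := by omega
  simp only [Nat.add_sub_cancel, hm, show m + 1 + (r + 1) - 1 = m + r + 1 by omega]
  rw [Nat.succ_descFactorial_succ r i, Nat.descFactorial_eq_factorial_mul_choose r i,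
    ← Nat.factorial_mul_descFactorial (show r + 1 ≤ m + r + 1 by omega),
    show m + r + 1 - (r + 1) = m by omega,
    ← Nat.factorial_mul_descFactorial (show m - i ≤ m by omega),
    Nat.sub_sub_self (show i ≤ m by omega)]
  ring

theorem neg_one_pow_mul_neg_one_pow_mul_neg_pow_mul_pow {R : Type*} [CommRing R] {p q j : ℕ}
    (hjp : j ≤ p) (hjq : j ≤ q) (z u : R) :
    (-1) ^ p * (-1) ^ q * (-z) ^ (p - j) * u ^ (q - j) = z ^ (p - j) * (-u) ^ (q - j) := by
  obtain ⟨a, rfl⟩ := Nat.exists_eq_add_of_le hjp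
  obtain ⟨b, rfl⟩ := Nat.exists_eq_add_of_le hjq
  simp only [Nat.add_sub_cancel_left, neg_pow z, neg_pow u]
  ring_nf
  simp only [pow_mul', neg_one_sq, one_pow, mul_one]

theorem scattering_polynomial_rodrigues_term {K : Type*} [Field K] [CharZero K] {p q j : ℕ}
    (hj : 1 ≤ j) (hjp : j ≤ p) (hjq : j ≤ q) (z u : K) :
    (-1) ^ p / (q * (p + q - 1).factorial) * (1 - z * u)
        * ((p + q - 1).descFactorial q * (-1) ^ q
          * (p.choose j * (q.descFactorial j * u ^ (q - j))
            * ((p - 1).descFactorial (p - j) * (-z) ^ (p - j) * (1 - z * u) ^ (j - 1))))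
      = p.choose j * (q - 1).choose (j - 1) * z ^ (p - j) * (-u) ^ (q - j) * (1 - z * u) ^ j := by
  have hcoeff :
      ((p + q - 1).descFactorial q * q.descFactorial j * (p - 1).descFactorial (p - j) : K)
        = q * (q - 1).choose (j - 1) * (p + q - 1).factorial := by
    exact_mod_cast Nat.descFactorial_mul_descFactorial_mul_descFactorial hj hjp hjq
  have hq : (q : K) ≠ 0 := by exact_mod_cast (show q ≠ 0 by omega)
  have hF : ((p + q - 1).factorial : K) ≠ 0 := by exact_mod_cast Nat.factorial_ne_zero _
  calc _ = p.choose j * ((p + q - 1).descFactorial q * q.descFactorial j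
            * (p - 1).descFactorial (p - j) / (q * (p + q - 1).factorial))
          * ((-1) ^ p * (-1) ^ q * (-z) ^ (p - j) * u ^ (q - j))
          * ((1 - z * u) ^ (j - 1) * (1 - z * u)) := by ring
    _ = _ := by
      rw [hcoeff, neg_one_pow_mul_neg_one_pow_mul_neg_pow_mul_pow hjp hjq, ← pow_succ,
        Nat.sub_add_cancel hj]
      field_simp

theorem scattering_polynomial_rodrigues_general (p q : ℕ) (hp : 1 ≤ p) (z : ℂ) :
    ((-1 : ℂ) ^ p / ((q : ℂ) * (Nat.factorial (p + q - 1) : ℂ)))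
        * (1 - z * (starRingEnd ℂ) z)
        * iteratedDeriv p
            (fun w : ℂ => iteratedDeriv q (fun z' : ℂ => (1 - z' * w) ^ (p + q - 1)) z)
            ((starRingEnd ℂ) z)
      = ∑ j ∈ Finset.Icc 1 (min p q),
          (p.choose j : ℂ) * ((q - 1).choose (j - 1) : ℂ)
            * z ^ (p - j) * (-(starRingEnd ℂ) z) ^ (q - j)
            * (1 - z * (starRingEnd ℂ) z) ^ j := by
  have hinner : (fun w : ℂ => iteratedDeriv q (fun z' : ℂ => (1 - z' * w) ^ (p + q - 1)) z)
      = fun w => ((p + q - 1).descFactorial q * (-1) ^ q : ℂ)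
          * (w ^ q * (1 - z * w) ^ (p - 1)) := by
    ext w
    rw [show (fun z' : ℂ => (1 - z' * w) ^ (p + q - 1)) = fun z' => (1 - w * z') ^ (p + q - 1) by
      ext; ring, iteratedDeriv_const_sub_mul_pow, show p + q - 1 - q = p - 1 by omega, neg_pow]
    ring
  rw [hinner, iteratedDeriv_const_mul_field, iteratedDeriv_pow_mul_sub_mul_pow_pred 1 z hp,
    mul_sum, mul_sum]
  refine sum_congr rfl fun j hj => ?_
  obtain ⟨hj, hjpq⟩ := mem_Icc.mp hj
  exact scattering_polynomial_rodrigues_term hj (hjpq.trans (min_le_left _ _))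
    (hjpq.trans (min_le_right _ _)) _ _

/-- The Rodrigues-type formula for scattering polynomials: for `p, q ≥ 1` and `z` in the closed
unit disk, `((-1)^p/(q (p+q-1)!)) (1-z z̄) ∂^{p+q}/(∂z̄^p ∂z^q) (1-z z̄)^{p+q-1}` equals the
explicit sum `Σ_{j=1}^{min(p,q)} C(p,j) C(q-1,j-1) z^{p-j} (-z̄)^{q-j} (1-z z̄)^j`, where the
Wirtinger derivatives are taken treating `z` and `z̄` as independent complex variables. -/
theorem scattering_polynomial_rodrigues (p q : ℕ) (hp : 1 ≤ p) (hq : 1 ≤ q)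
    (z : ℂ) (hz : ‖z‖ ≤ 1) :
    ((-1 : ℂ) ^ p / ((q : ℂ) * (Nat.factorial (p + q - 1) : ℂ)))
        * (1 - z * (starRingEnd ℂ) z)
        * iteratedDeriv p
            (fun w : ℂ => iteratedDeriv q (fun z' : ℂ => (1 - z' * w) ^ (p + q - 1)) z)
            ((starRingEnd ℂ) z)
      = ∑ j ∈ Finset.Icc 1 (min p q),
          (p.choose j : ℂ) * ((q - 1).choose (j - 1) : ℂ)
            * z ^ (p - j) * (-(starRingEnd ℂ) z) ^ (q - j)
            * (1 - z * (starRingEnd ℂ) z) ^ j :=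
  scattering_polynomial_rodrigues_general p q hp z
end

section
/- With Pₙ = M₀M₁⋯Mₙ and entries [[Ψₙ, Ψₙ*],[-Φₙ, Φₙ*]], for every n ≥ 1 and z with all coordinates nonzero one has Ψₙ*(z) = z_{ν(1)}⋯z_{ν(n)}·conj(Ψₙ(1/conj(z))) and Φₙ*(z) = z_{ν(1)}⋯z_{ν(n)}·conj(Φₙ(1/conj(z))), where 1/conj(z) = (1/conj(z₁),...,1/conj(z_d)). -/
open Complex Finset Matrix

/-!
Put `w = 1 / conj z` and let `X ↦ X̃` be entrywise conjugation followed by swapping both indices,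
i.e. `X̃ = J conj(X) J` with `J = !![0, 1; 1, 0]`; it is a ring endomorphism of 2 × 2 matrices.
For `k ≥ 1` one checks directly that `Mₖ(z) = z_{ν(k)} M̃ₖ(w)`, and `M₀ = K M̃₀` with
`K = !![0, 1; -1, 0]`. Multiplying out, `Pₙ(z) = z_{ν(1)}⋯z_{ν(n)} K P̃ₙ(w)`, and the right column
of `K X̃` is `(conj X₀₀, -conj X₁₀)`.
-/

section SwapConj

variable {R : Type*} [CommRing R] [StarRing R]

def swapConj : Matrix (Fin 2) (Fin 2) R →+* Matrix (Fin 2) (Fin 2) R :=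
  (reindexRingEquiv R (Equiv.swap 0 1)).toRingHom.comp (starRingEnd R).mapMatrix

theorem swapConj_apply (X : Matrix (Fin 2) (Fin 2) R) (i j : Fin 2) :
    swapConj X i j = starRingEnd R (X (Equiv.swap 0 1 i) (Equiv.swap 0 1 j)) :=
  rfl

theorem swapConj_of (a b c d : R) :
    swapConj !![a, b; c, d] =
      !![starRingEnd R d, starRingEnd R c; starRingEnd R b, starRingEnd R a] := by
  ext i j
  fin_cases i <;> fin_cases j <;> rfl

theorem mul_swapConj (X : Matrix (Fin 2) (Fin 2) R) :
    !![0, 1; -1, 0] * swapConj X =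
      !![starRingEnd R (X 0 1), starRingEnd R (X 0 0);
        -starRingEnd R (X 1 1), -starRingEnd R (X 1 0)] := by
  ext i j
  fin_cases i <;> fin_cases j <;> simp [mul_apply, swapConj_apply]

end SwapConj

theorem list_prod_range_succ_eq_smul {R S T F : Type*} [CommSemiring R] [Monoid S] [Semiring T]
    [Algebra R T] [FunLike F S T] [MonoidHomClass F S T]
    (φ : F) (K : T) (A : ℕ → T) (B : ℕ → S) (c : ℕ → R)
    (h₀ : A 0 = K * φ (B 0)) (hA : ∀ k, 1 ≤ k → A k = c k • φ (B k)) (n : ℕ) :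
    ((List.range (n + 1)).map A).prod =
      (∏ k ∈ Icc 1 n, c k) • (K * φ ((List.range (n + 1)).map B).prod) := by
  induction n with
  | zero => simp [h₀]
  | succ n ih =>
    rw [List.prod_range_succ, ih, hA _ n.succ_pos, List.prod_range_succ B (n + 1), map_mul,
      prod_Icc_succ_top (by omega), smul_mul_smul_comm, mul_assoc]

theorem smul_swapConj_conj_inv {K : Type*} [Field K] [StarRing K] {x : K} (hx : x ≠ 0) (r : K) :
    x • swapConj !![(starRingEnd K x)⁻¹, r * (starRingEnd K x)⁻¹; starRingEnd K r, 1] =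
      !![x, r * x; starRingEnd K r, 1] := by
  rw [swapConj_of]
  ext i j
  fin_cases i <;> fin_cases j <;> simp [hx, mul_comm, starRingEnd_apply]

theorem star_identities_general (d : ℕ)
    (r : ℕ → ℂ)
    (ν : ℕ → Fin d)
    (M : (Fin d → ℂ) → ℕ → Matrix (Fin 2) (Fin 2) ℂ)
    (hM0 : ∀ z, M z 0 = !![1, 1; -1, 1])
    (hM : ∀ z n, 1 ≤ n → M z n = !![z (ν n), r n * z (ν n); (starRingEnd ℂ) (r n), 1])
    (P : (Fin d → ℂ) → ℕ → Matrix (Fin 2) (Fin 2) ℂ)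
    (hP : ∀ z n, P z n = ((List.range (n + 1)).map (M z)).prod)
    (n : ℕ) (z : Fin d → ℂ) (hz : ∀ j, z j ≠ 0) :
    P z n 0 1
        = (∏ k ∈ Finset.Icc 1 n, z (ν k))
            * (starRingEnd ℂ) (P (fun j => ((starRingEnd ℂ) (z j))⁻¹) n 0 0) ∧
    P z n 1 1
        = (∏ k ∈ Finset.Icc 1 n, z (ν k))
            * (starRingEnd ℂ) (-(P (fun j => ((starRingEnd ℂ) (z j))⁻¹) n 1 0)) := by
  set w : Fin d → ℂ := fun j => (starRingEnd ℂ (z j))⁻¹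
  have h₀ : M z 0 = !![0, 1; -1, 0] * swapConj (M w 0) := by
    rw [hM0, hM0, mul_swapConj]
    simp
  have hstep (k : ℕ) (hk : 1 ≤ k) : M z k = z (ν k) • swapConj (M w k) := by
    rw [hM z k hk, hM w k hk]
    exact (smul_swapConj_conj_inv (hz (ν k)) (r k)).symm
  have hPz := list_prod_range_succ_eq_smul swapConj _ _ _ _ h₀ hstep n
  rw [hP, hP, hPz, mul_swapConj]
  simp

/-- The reversal identities `Ψₙ*(z) = z_{ν₁}⋯z_{νₙ} conj(Ψₙ(1/conj z))` and
`Φₙ*(z) = z_{ν₁}⋯z_{νₙ} conj(Φₙ(1/conj z))` for the entries of `Pₙ(z) = M₀ M₁(z) ⋯ Mₙ(z)`. -/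
theorem star_identities (d : ℕ) (hd : 1 ≤ d)
    (r : ℕ → ℂ) (hr : ∀ n, ‖r n‖ < 1)
    (ν : ℕ → Fin d)
    (M : (Fin d → ℂ) → ℕ → Matrix (Fin 2) (Fin 2) ℂ)
    (hM0 : ∀ z, M z 0 = !![1, 1; -1, 1])
    (hM : ∀ z n, 1 ≤ n → M z n = !![z (ν n), r n * z (ν n); (starRingEnd ℂ) (r n), 1])
    (P : (Fin d → ℂ) → ℕ → Matrix (Fin 2) (Fin 2) ℂ)
    (hP : ∀ z n, P z n = ((List.range (n + 1)).map (M z)).prod)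
    (n : ℕ) (hn : 1 ≤ n) (z : Fin d → ℂ) (hz : ∀ j, z j ≠ 0) :
    P z n 0 1
        = (∏ k ∈ Finset.Icc 1 n, z (ν k))
            * (starRingEnd ℂ) (P (fun j => ((starRingEnd ℂ) (z j))⁻¹) n 0 0) ∧
    P z n 1 1
        = (∏ k ∈ Finset.Icc 1 n, z (ν k))
            * (starRingEnd ℂ) (-(P (fun j => ((starRingEnd ℂ) (z j))⁻¹) n 1 0)) :=
  star_identities_general d r ν M hM0 hM P hP n z hz
end

section
/- With Pₙ as above (all |r_j| < 1), the polynomial Φₙ* is zero-free on the closed unit polydisk: for all z ∈ ℂ^d with |z_j| ≤ 1 for each j, Φₙ*(z) ≠ 0. -/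
/-!
Write `(a, b)` for the bottom row `(-Φₘ, Φₘ*)` of `Pₘ`. Right multiplication by `Mₘ₊₁` sends it
to `(a w + b ρ̄, a ρ w + b)` with `w = z_{ν(m+1)}` and `ρ = rₘ₊₁`, and
`|a ρ w + b|² - |a w + b ρ̄|² = (1 - |ρ|²) (|b|² - |a|² |w|²)`.
So on the closed polydisk `|a| ≤ |b|` propagates from `P₀` (where `a = -1`, `b = 1`), and together
with `|ρ w| < 1` it keeps `b ≠ 0` at every step.
-/

open Complex ComplexConjugate Matrix

theorem normSq_mul_add_sub_normSq_mul_add_mul_conj (a b w ρ : ℂ) :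
    normSq (a * (ρ * w) + b) - normSq (a * w + b * conj ρ)
      = (1 - normSq ρ) * (normSq b - normSq a * normSq w) := by
  simp only [normSq_add, normSq_conj, map_mul, conj_conj]
  ring_nf

theorem norm_mul_add_mul_conj_le {a b w ρ : ℂ} (hw : ‖w‖ ≤ 1) (hρ : ‖ρ‖ ≤ 1)
    (hab : ‖a‖ ≤ ‖b‖) : ‖a * w + b * conj ρ‖ ≤ ‖a * (ρ * w) + b‖ := by
  have hρ' : normSq ρ ≤ 1 := by rw [← Complex.sq_norm]; exact pow_le_one₀ (norm_nonneg ρ) hρ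
  have hw' : normSq w ≤ 1 := by rw [← Complex.sq_norm]; exact pow_le_one₀ (norm_nonneg w) hw
  have hab' : normSq a ≤ normSq b := by rw [← Complex.sq_norm, ← Complex.sq_norm]; gcongr
  have hsq : normSq (a * w + b * conj ρ) ≤ normSq (a * (ρ * w) + b) := by
    rw [← sub_nonneg, normSq_mul_add_sub_normSq_mul_add_mul_conj]
    exact mul_nonneg (sub_nonneg.2 hρ')
      (sub_nonneg.2 ((mul_le_of_le_one_right (normSq_nonneg a) hw').trans hab'))
  rw [Complex.norm_def, Complex.norm_def]
  exact Real.sqrt_le_sqrt hsq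

theorem mul_add_ne_zero_of_norm_le {a b c : ℂ} (hab : ‖a‖ ≤ ‖b‖) (hb : b ≠ 0) (hc : ‖c‖ < 1) :
    a * c + b ≠ 0 := by
  have hlt : ‖a * c‖ < ‖b‖ :=
    calc ‖a * c‖ = ‖a‖ * ‖c‖ := norm_mul a c
      _ ≤ ‖b‖ * ‖c‖ := by gcongr
      _ < ‖b‖ := mul_lt_of_lt_one_right (norm_pos_iff.2 hb) hc
  intro h
  rw [eq_neg_of_add_eq_zero_right h, norm_neg] at hlt
  exact lt_irrefl _ hlt

def BottomRowDominant (A : Matrix (Fin 2) (Fin 2) ℂ) : Prop :=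
  ‖A 1 0‖ ≤ ‖A 1 1‖ ∧ A 1 1 ≠ 0

theorem BottomRowDominant.mul {A : Matrix (Fin 2) (Fin 2) ℂ} (hA : BottomRowDominant A)
    {w ρ : ℂ} (hw : ‖w‖ ≤ 1) (hρ : ‖ρ‖ < 1) :
    BottomRowDominant (A * !![w, ρ * w; conj ρ, 1]) := by
  have hρw : ‖ρ * w‖ < 1 := by
    rw [norm_mul]; exact (mul_le_of_le_one_right (norm_nonneg ρ) hw).trans_lt hρ
  simp only [BottomRowDominant, mul_apply, Fin.sum_univ_two, of_apply, cons_val', cons_val_zero,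
    cons_val_one, empty_val', cons_val_fin_one, mul_one]
  exact ⟨norm_mul_add_mul_conj_le hw hρ.le hA.1, mul_add_ne_zero_of_norm_le hA.1 hA.2 hρw⟩

theorem phi_star_zero_free_general (d : ℕ)
    (r : ℕ → ℂ) (hr : ∀ n, ‖r n‖ < 1)
    (ν : ℕ → Fin d)
    (M : (Fin d → ℂ) → ℕ → Matrix (Fin 2) (Fin 2) ℂ)
    (hM0 : ∀ z, M z 0 = !![1, 1; -1, 1])
    (hM : ∀ z n, 1 ≤ n → M z n = !![z (ν n), r n * z (ν n); (starRingEnd ℂ) (r n), 1])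
    (P : (Fin d → ℂ) → ℕ → Matrix (Fin 2) (Fin 2) ℂ)
    (hP : ∀ z n, P z n = ((List.range (n + 1)).map (M z)).prod)
    (n : ℕ) (z : Fin d → ℂ) (hz : ∀ j, ‖z j‖ ≤ 1) :
    P z n 1 1 ≠ 0 := by
  suffices ∀ m, BottomRowDominant (P z m) from (this n).2
  intro m
  induction m with
  | zero =>
    rw [hP, List.range_one, List.map_singleton, List.prod_singleton, hM0]
    norm_num [BottomRowDominant]
  | succ m ih =>
    rw [hP, List.prod_range_succ, ← hP, hM z (m + 1) m.succ_pos]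
    exact ih.mul (hz _) (hr _)

/-- The polynomial `Φₙ* = (Pₙ)₂₂` is zero-free on the closed unit polydisk. -/
theorem phi_star_zero_free (d : ℕ) (hd : 1 ≤ d)
    (r : ℕ → ℂ) (hr : ∀ n, ‖r n‖ < 1)
    (ν : ℕ → Fin d)
    (M : (Fin d → ℂ) → ℕ → Matrix (Fin 2) (Fin 2) ℂ)
    (hM0 : ∀ z, M z 0 = !![1, 1; -1, 1])
    (hM : ∀ z n, 1 ≤ n → M z n = !![z (ν n), r n * z (ν n); (starRingEnd ℂ) (r n), 1])
    (P : (Fin d → ℂ) → ℕ → Matrix (Fin 2) (Fin 2) ℂ)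
    (hP : ∀ z n, P z n = ((List.range (n + 1)).map (M z)).prod)
    (n : ℕ) (z : Fin d → ℂ) (hz : ∀ j, ‖z j‖ ≤ 1) :
    P z n 1 1 ≠ 0 :=
  phi_star_zero_free_general d r hr ν M hM0 hM P hP n z hz
end

section
/- With Pₙ as above, the sum Ψₙ* + Φₙ* is zero-free on the closed unit polydisk for every n ≥ 0. -/
/-!
Track the row vector `(1, 1) Pₙ = (Ψₙ - Φₙ, Ψₙ* + Φₙ*)`. Right multiplication by
`Mₙ` sends `(a, b)` to `(w a + ρ̄ b, b + ρ w a)` with `w = z_{ν(n)}`, `ρ = rₙ`, and the identity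
`|b + ρ u|² - |u + ρ̄ b|² = (1 - |ρ|²)(|b|² - |u|²)` shows that `|a| < |b|` is preserved when
`|w| ≤ 1` and `|ρ| < 1`. It holds for `(1, 1) P₀ = (0, 2)`, so the second entry never vanishes.
-/

open Complex Matrix ComplexConjugate

lemma normSq_add_mul_sub_normSq_add_conj_mul (u b ρ : ℂ) :
    normSq (b + ρ * u) - normSq (u + conj ρ * b) = (1 - normSq ρ) * (normSq b - normSq u) := by
  simp only [normSq_apply, add_re, add_im, mul_re, mul_im, conj_re, conj_im]
  ring

lemma norm_add_conj_mul_lt_norm_add_mul {u b ρ : ℂ} (hub : ‖u‖ < ‖b‖) (hρ : ‖ρ‖ < 1) :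
    ‖u + conj ρ * b‖ < ‖b + ρ * u‖ := by
  have hρ' : normSq ρ < 1 := by
    rw [normSq_eq_norm_sq]; nlinarith [norm_nonneg ρ]
  have hub' : normSq u < normSq b := by
    rw [normSq_eq_norm_sq, normSq_eq_norm_sq]; nlinarith [norm_nonneg u]
  have h := normSq_add_mul_sub_normSq_add_conj_mul u b ρ
  have hlt : normSq (u + conj ρ * b) < normSq (b + ρ * u) := by
    nlinarith [mul_pos (sub_pos.2 hρ') (sub_pos.2 hub')]
  rw [normSq_eq_norm_sq, normSq_eq_norm_sq] at hlt
  exact lt_of_pow_lt_pow_left₀ 2 (norm_nonneg _) hlt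

lemma norm_vecMul_lt_of_norm_lt {v : Fin 2 → ℂ} (hv : ‖v 0‖ < ‖v 1‖) {w ρ : ℂ}
    (hw : ‖w‖ ≤ 1) (hρ : ‖ρ‖ < 1) :
    ‖(v ᵥ* !![w, ρ * w; conj ρ, 1]) 0‖ < ‖(v ᵥ* !![w, ρ * w; conj ρ, 1]) 1‖ := by
  have hwv : ‖w * v 0‖ < ‖v 1‖ := by
    rw [norm_mul]
    exact lt_of_le_of_lt (mul_le_of_le_one_left (norm_nonneg _) hw) hv
  have key := norm_add_conj_mul_lt_norm_add_mul hwv hρ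
  simp only [vecMul, vec2_dotProduct]
  convert key using 2 <;> simp <;> ring

lemma norm_vecMul_list_prod_lt_of_norm_lt {L : List (Matrix (Fin 2) (Fin 2) ℂ)}
    (hL : ∀ N ∈ L, ∃ w ρ : ℂ, ‖w‖ ≤ 1 ∧ ‖ρ‖ < 1 ∧ N = !![w, ρ * w; conj ρ, 1])
    {v : Fin 2 → ℂ} (hv : ‖v 0‖ < ‖v 1‖) :
    ‖(v ᵥ* L.prod) 0‖ < ‖(v ᵥ* L.prod) 1‖ := by
  induction L generalizing v with
  | nil => simpa using hv
  | cons N L ih =>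
    obtain ⟨w, ρ, hw, hρ, rfl⟩ := hL N List.mem_cons_self
    rw [List.prod_cons, ← vecMul_vecMul]
    exact ih (fun N hN => hL N (List.mem_cons_of_mem _ hN)) (norm_vecMul_lt_of_norm_lt hv hw hρ)

theorem psi_star_plus_phi_star_zero_free_general (d : ℕ)
    (r : ℕ → ℂ) (hr : ∀ n, ‖r n‖ < 1)
    (ν : ℕ → Fin d)
    (M : (Fin d → ℂ) → ℕ → Matrix (Fin 2) (Fin 2) ℂ)
    (hM0 : ∀ z, M z 0 = !![1, 1; -1, 1])
    (hM : ∀ z n, 1 ≤ n → M z n = !![z (ν n), r n * z (ν n); (starRingEnd ℂ) (r n), 1])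
    (P : (Fin d → ℂ) → ℕ → Matrix (Fin 2) (Fin 2) ℂ)
    (hP : ∀ z n, P z n = ((List.range (n + 1)).map (M z)).prod)
    (n : ℕ) (z : Fin d → ℂ) (hz : ∀ j, ‖z j‖ ≤ 1) :
    P z n 0 1 + P z n 1 1 ≠ 0 := by
  have hsteps : ∀ N ∈ (List.range n).map (M z ∘ Nat.succ),
      ∃ w ρ : ℂ, ‖w‖ ≤ 1 ∧ ‖ρ‖ < 1 ∧ N = !![w, ρ * w; conj ρ, 1] := by
    simp only [List.mem_map, Function.comp_apply]
    rintro _ ⟨k, -, rfl⟩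
    exact ⟨_, _, hz _, hr _, hM z _ k.succ_pos⟩
  have hP_eq : P z n = M z 0 * ((List.range n).map (M z ∘ Nat.succ)).prod := by
    rw [hP, List.range_succ_eq_map, List.map_cons, List.map_map, List.prod_cons]
  have hstart : ‖(![1, 1] ᵥ* M z 0) 0‖ < ‖(![1, 1] ᵥ* M z 0) 1‖ := by
    simp [hM0, vecMul, dotProduct, Fin.sum_univ_two]
  have hlt := norm_vecMul_list_prod_lt_of_norm_lt hsteps hstart
  rw [vecMul_vecMul, ← hP_eq] at hlt
  have hcol : (![1, 1] ᵥ* P z n) 1 = P z n 0 1 + P z n 1 1 := by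
    simp [vecMul, dotProduct, Fin.sum_univ_two]
  rw [← hcol]
  exact norm_pos_iff.mp (lt_of_le_of_lt (norm_nonneg _) hlt)

/-- The sum `Ψₙ* + Φₙ* = (Pₙ)₁₂ + (Pₙ)₂₂` is zero-free on the closed unit polydisk. -/
theorem psi_star_plus_phi_star_zero_free (d : ℕ) (hd : 1 ≤ d)
    (r : ℕ → ℂ) (hr : ∀ n, ‖r n‖ < 1)
    (ν : ℕ → Fin d)
    (M : (Fin d → ℂ) → ℕ → Matrix (Fin 2) (Fin 2) ℂ)
    (hM0 : ∀ z, M z 0 = !![1, 1; -1, 1])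
    (hM : ∀ z n, 1 ≤ n → M z n = !![z (ν n), r n * z (ν n); (starRingEnd ℂ) (r n), 1])
    (P : (Fin d → ℂ) → ℕ → Matrix (Fin 2) (Fin 2) ℂ)
    (hP : ∀ z n, P z n = ((List.range (n + 1)).map (M z)).prod)
    (n : ℕ) (z : Fin d → ℂ) (hz : ∀ j, ‖z j‖ ≤ 1) :
    P z n 0 1 + P z n 1 1 ≠ 0 :=
  psi_star_plus_phi_star_zero_free_general d r hr ν M hM0 hM P hP n z hz
end

section
/- For the n-th convergent fₙ = (Ψₙ* - Φₙ*)/(Ψₙ* + Φₙ*) and z on the torus 𝕋^d, one has Re((1+fₙ(z))/(1-fₙ(z))) = ∏_{j=1}^n (1-|r_j|²) / |Φₙ*(z)|². -/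
open Complex Finset Matrix

/-!
With `σx = !![0, 1; 1, 0]` and `σz = !![1, 0; 0, -1]`, on the torus every factor `Mₖ` (`k ≥ 1`)
satisfies `Mₖᴴ σz Mₖ = (1 - |rₖ|²) σz`, while `M₀ᴴ σx M₀ = -2 σz`. Hence
`Pₙᴴ σx Pₙ = -2 ∏ (1 - |rₖ|²) σz`, and its `(1, 1)` entry reads `Re(conj Φₙ* Ψₙ*) = ∏ (1 - |rₖ|²)`.
Finally `(1 + fₙ)/(1 - fₙ) = Ψₙ*/Φₙ*`, whose real part is `Re(conj Φₙ* Ψₙ*) / |Φₙ*|²`; positivity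
of the product excludes `Ψₙ* + Φₙ* = 0`.
-/

def sigmaX : Matrix (Fin 2) (Fin 2) ℂ := !![0, 1; 1, 0]

def sigmaZ : Matrix (Fin 2) (Fin 2) ℂ := !![1, 0; 0, -1]

theorem conjTranspose_mul_mul_mul_of_conjTranspose_mul_mul {R ι : Type*} [CommRing R] [StarRing R]
    [Fintype ι] [DecidableEq ι] {A B Q J : Matrix ι ι R} {a b : R}
    (hA : Aᴴ * Q * A = a • J) (hB : Bᴴ * J * B = b • J) :
    (A * B)ᴴ * Q * (A * B) = (a * b) • J := by
  calc (A * B)ᴴ * Q * (A * B) = Bᴴ * (Aᴴ * Q * A) * B := by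
        simp only [conjTranspose_mul, Matrix.mul_assoc]
    _ = (a * b) • J := by
        rw [hA, Matrix.mul_smul, Matrix.smul_mul, hB, smul_smul, mul_comm]

theorem conjTranspose_mul_sigmaZ_mul_schurStep {w r : ℂ} (hw : ‖w‖ = 1) :
    (!![w, r * w; starRingEnd ℂ r, 1])ᴴ * sigmaZ * !![w, r * w; starRingEnd ℂ r, 1]
      = ((1 - ‖r‖ ^ 2 : ℝ) : ℂ) • sigmaZ := by
  have hw' : starRingEnd ℂ w * w = 1 := by simp [conj_mul', hw]
  have hr : starRingEnd ℂ r * r = (‖r‖ : ℂ) ^ 2 := conj_mul' r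
  ext i j
  fin_cases i <;> fin_cases j <;>
    simp [Matrix.mul_apply, Fin.sum_univ_two, sigmaZ]
  · linear_combination hw' - hr
  · linear_combination r * hw'
  · linear_combination starRingEnd ℂ r * hw'
  · linear_combination starRingEnd ℂ r * r * hw' + hr

theorem conjTranspose_mul_sigmaX_mul_initial :
    (!![1, 1; -1, 1] : Matrix (Fin 2) (Fin 2) ℂ)ᴴ * sigmaX * !![1, 1; -1, 1]
      = (-2 : ℂ) • sigmaZ := by
  ext i j
  fin_cases i <;> fin_cases j <;>
    simp [Matrix.mul_apply, Fin.sum_univ_two, sigmaX, sigmaZ] <;> norm_num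

theorem conjTranspose_mul_sigmaX_mul_schurProduct {r w : ℕ → ℂ} (hw : ∀ k, ‖w k‖ = 1)
    {M : ℕ → Matrix (Fin 2) (Fin 2) ℂ} (hM0 : M 0 = !![1, 1; -1, 1])
    (hM : ∀ k, 1 ≤ k → M k = !![w k, r k * w k; starRingEnd ℂ (r k), 1]) (n : ℕ) :
    (((List.range (n + 1)).map M).prod)ᴴ * sigmaX * ((List.range (n + 1)).map M).prod
      = (-2 * ((∏ k ∈ Icc 1 n, (1 - ‖r k‖ ^ 2) : ℝ) : ℂ)) • sigmaZ := by
  induction n with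
  | zero => simpa [hM0] using conjTranspose_mul_sigmaX_mul_initial
  | succ n ih =>
    rw [List.range_succ, List.map_append, List.prod_append, List.map_singleton,
      List.prod_singleton, hM (n + 1) (by omega), prod_Icc_succ_top (by omega), ofReal_mul,
      ← mul_assoc (-2 : ℂ)]
    exact conjTranspose_mul_mul_mul_of_conjTranspose_mul_mul ih
      (conjTranspose_mul_sigmaZ_mul_schurStep (hw (n + 1)))

theorem re_conj_mul_of_conjTranspose_mul_sigmaX_mul {A : Matrix (Fin 2) (Fin 2) ℂ} {c : ℝ}
    (hA : Aᴴ * sigmaX * A = (-2 * (c : ℂ)) • sigmaZ) :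
    (starRingEnd ℂ (A 1 1) * A 0 1).re = c := by
  have h := congrArg re (congrFun (congrFun hA 1) 1)
  simp [Matrix.mul_apply, Fin.sum_univ_two, sigmaX, sigmaZ] at h
  simp only [mul_re, conj_re, conj_im]
  linarith

theorem re_cayley_of_re_conj_mul {Ψ Φ : ℂ} {c : ℝ} (hc : 0 < c)
    (h : (starRingEnd ℂ Φ * Ψ).re = c) :
    ((1 + (Ψ - Φ) / (Ψ + Φ)) / (1 - (Ψ - Φ) / (Ψ + Φ))).re = c / ‖Φ‖ ^ 2 := by
  have hsum : Ψ + Φ ≠ 0 := by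
    intro hs
    rw [eq_neg_of_add_eq_zero_left hs, mul_neg, conj_mul'] at h
    norm_cast at h
    nlinarith [norm_nonneg Φ]
  have hcayley : (1 + (Ψ - Φ) / (Ψ + Φ)) / (1 - (Ψ - Φ) / (Ψ + Φ)) = Ψ / Φ := by
    rw [one_add_div hsum, one_sub_div hsum, div_div_div_cancel_right₀ hsum,
      show Ψ + Φ + (Ψ - Φ) = 2 * Ψ by ring, show Ψ + Φ - (Ψ - Φ) = 2 * Φ by ring,
      mul_div_mul_left _ _ two_ne_zero]
  rw [hcayley, div_re, ← h, normSq_eq_norm_sq]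
  simp only [mul_re, conj_re, conj_im]
  ring

theorem real_part_representation_general (d : ℕ)
    (r : ℕ → ℂ) (hr : ∀ n, ‖r n‖ < 1)
    (ν : ℕ → Fin d)
    (M : (Fin d → ℂ) → ℕ → Matrix (Fin 2) (Fin 2) ℂ)
    (hM0 : ∀ z, M z 0 = !![1, 1; -1, 1])
    (hM : ∀ z n, 1 ≤ n → M z n = !![z (ν n), r n * z (ν n); (starRingEnd ℂ) (r n), 1])
    (P : (Fin d → ℂ) → ℕ → Matrix (Fin 2) (Fin 2) ℂ)
    (hP : ∀ z n, P z n = ((List.range (n + 1)).map (M z)).prod)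
    (n : ℕ) (z : Fin d → ℂ) (hz : ∀ j, ‖z j‖ = 1) :
    ((1 + (P z n 0 1 - P z n 1 1) / (P z n 0 1 + P z n 1 1))
        / (1 - (P z n 0 1 - P z n 1 1) / (P z n 0 1 + P z n 1 1))).re
      = (∏ k ∈ Finset.Icc 1 n, (1 - (‖r k‖) ^ 2))
          / (‖P z n 1 1‖) ^ 2 := by
  have hJ := conjTranspose_mul_sigmaX_mul_schurProduct (fun k ↦ hz (ν k)) (hM0 z) (hM z) n
  rw [← hP] at hJ
  have hpos : 0 < ∏ k ∈ Icc 1 n, (1 - ‖r k‖ ^ 2) :=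
    prod_pos fun k _ ↦ sub_pos.2 (pow_lt_one₀ (norm_nonneg _) (hr k) two_ne_zero)
  exact re_cayley_of_re_conj_mul hpos (re_conj_mul_of_conjTranspose_mul_sigmaX_mul hJ)

/-- On the torus, `Re((1+fₙ)/(1-fₙ)) = ∏_{j=1}^n (1-|r_j|²) / |Φₙ*|²`, where
`fₙ = (Ψₙ* - Φₙ*)/(Ψₙ* + Φₙ*)`. -/
theorem real_part_representation (d : ℕ) (hd : 1 ≤ d)
    (r : ℕ → ℂ) (hr : ∀ n, ‖r n‖ < 1)
    (ν : ℕ → Fin d)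
    (M : (Fin d → ℂ) → ℕ → Matrix (Fin 2) (Fin 2) ℂ)
    (hM0 : ∀ z, M z 0 = !![1, 1; -1, 1])
    (hM : ∀ z n, 1 ≤ n → M z n = !![z (ν n), r n * z (ν n); (starRingEnd ℂ) (r n), 1])
    (P : (Fin d → ℂ) → ℕ → Matrix (Fin 2) (Fin 2) ℂ)
    (hP : ∀ z n, P z n = ((List.range (n + 1)).map (M z)).prod)
    (n : ℕ) (z : Fin d → ℂ) (hz : ∀ j, ‖z j‖ = 1) :
    ((1 + (P z n 0 1 - P z n 1 1) / (P z n 0 1 + P z n 1 1))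
        / (1 - (P z n 0 1 - P z n 1 1) / (P z n 0 1 + P z n 1 1))).re
      = (∏ k ∈ Finset.Icc 1 n, (1 - (‖r k‖) ^ 2))
          / (‖P z n 1 1‖) ^ 2 :=
  real_part_representation_general d r hr ν M hM0 hM P hP n z hz
end

section
/- For the n-th convergent fₙ = (Ψₙ* - Φₙ*)/(Ψₙ* + Φₙ*) and gₙ = 2·∏_{j=1}^n sqrt(1-|r_j|²) / (Ψₙ* + Φₙ*), one has 1 - |fₙ(z)|² = |gₙ(z)|² for every z ∈ 𝕋^d. -/
/-!
With `J = diag(-1, 1)`, each transfer matrix `Mₖ` (`k ≥ 1`) is `J`-unitary up to a scalar on the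
torus: `Mₖᴴ J Mₖ = (1 - |rₖ|²) J`, while `M₀` carries the polarization form `K = !![0, 2; 2, 0]`
to `4 J`. Hence `Pₙᴴ K Pₙ = 4 ∏ (1 - |rₖ|²) J`, and the `(1, 1)` entry of this identity reads
`|Ψₙ* + Φₙ*|² - |Ψₙ* - Φₙ*|² = 4 ∏ (1 - |rₖ|²) = |2 ∏ √(1 - |rₖ|²)|²`. Dividing by
`|Ψₙ* + Φₙ*|²`, which is positive since the right-hand side is, gives the claim.
-/

open Complex Finset Matrix

section Forms

variable {ι R : Type*} [Fintype ι] [CommRing R] [StarRing R]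

theorem conjTranspose_mul_mul_mul_eq_smul {A B K J L : Matrix ι ι R} {a b : R}
    (hA : Aᴴ * K * A = a • J) (hB : Bᴴ * J * B = b • L) :
    (A * B)ᴴ * K * (A * B) = (a * b) • L :=
  calc (A * B)ᴴ * K * (A * B) = Bᴴ * (Aᴴ * K * A) * B := by
        simp only [conjTranspose_mul, Matrix.mul_assoc]
    _ = (a * b) • L := by rw [hA, Matrix.mul_smul, Matrix.smul_mul, hB, smul_smul]

theorem conjTranspose_mul_mul_eq_prod_Icc_smul {P B : ℕ → Matrix ι ι R} {K J : Matrix ι ι R}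
    {c₀ : R} {c : ℕ → R} (h₀ : (P 0)ᴴ * K * P 0 = c₀ • J)
    (hB : ∀ m, 1 ≤ m → (B m)ᴴ * J * B m = c m • J) (hP : ∀ m, P (m + 1) = P m * B (m + 1))
    (m : ℕ) : (P m)ᴴ * K * P m = (c₀ * ∏ k ∈ Icc 1 m, c k) • J := by
  induction m with
  | zero => rwa [Icc_eq_empty_of_lt zero_lt_one, prod_empty, mul_one]
  | succ m ih =>
    rw [hP, conjTranspose_mul_mul_mul_eq_smul ih (hB (m + 1) (Nat.le_add_left 1 m)),
      prod_Icc_succ_top (Nat.le_add_left 1 m), mul_assoc]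

end Forms

theorem conjTranspose_mul_polarization_mul_apply_one_one (X : Matrix (Fin 2) (Fin 2) ℂ) :
    (Xᴴ * (!![0, 2; 2, 0] : Matrix (Fin 2) (Fin 2) ℂ) * X) 1 1
      = ((‖X 0 1 + X 1 1‖ ^ 2 - ‖X 0 1 - X 1 1‖ ^ 2 : ℝ) : ℂ) := by
  simp only [Matrix.mul_apply, Fin.sum_univ_two, conjTranspose_apply]
  push_cast
  simp only [← mul_conj', map_add, map_sub, of_apply, cons_val', cons_val_zero, cons_val_one,
    cons_val_fin_one, RCLike.star_def]
  ring

theorem conjTranspose_mul_polarization_mul_initial :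
    (!![1, 1; -1, 1] : Matrix (Fin 2) (Fin 2) ℂ)ᴴ * !![0, 2; 2, 0] * !![1, 1; -1, 1]
      = (4 : ℂ) • !![-1, 0; 0, 1] := by
  ext i j
  fin_cases i <;> fin_cases j <;> simp [Matrix.mul_apply, Fin.sum_univ_two] <;> norm_num

theorem conjTranspose_mul_signature_mul_transfer {ζ ρ : ℂ} (hζ : ‖ζ‖ = 1) :
    (!![ζ, ρ * ζ; starRingEnd ℂ ρ, 1])ᴴ * !![-1, 0; 0, 1] * !![ζ, ρ * ζ; starRingEnd ℂ ρ, 1]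
      = ((1 - ‖ρ‖ ^ 2 : ℝ) : ℂ) • !![-1, 0; 0, 1] := by
  have hζ' : starRingEnd ℂ ζ * ζ = 1 := by rw [mul_comm, mul_conj', hζ]; simp
  have hρ := mul_conj' ρ
  ext i j
  fin_cases i <;> fin_cases j <;> simp [Matrix.mul_apply, Fin.sum_univ_two]
  · linear_combination hρ - hζ'
  · linear_combination (-ρ) * hζ'
  · linear_combination (-starRingEnd ℂ ρ) * hζ'
  · linear_combination (-ρ * starRingEnd ℂ ρ) * hζ' - hρ

theorem one_sub_norm_div_sq_eq {a b c : ℂ} (h : ‖a‖ ^ 2 - ‖b‖ ^ 2 = ‖c‖ ^ 2) (hc : c ≠ 0) :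
    1 - ‖b / a‖ ^ 2 = ‖c / a‖ ^ 2 := by
  have ha : a ≠ 0 := by
    rintro rfl
    have : 0 < ‖c‖ ^ 2 := by positivity
    nlinarith [sq_nonneg ‖b‖, norm_zero (E := ℂ)]
  rw [norm_div, norm_div, div_pow, div_pow, ← h]
  field_simp

theorem transmission_identity_general (d : ℕ)
    (r : ℕ → ℂ) (hr : ∀ n, ‖r n‖ < 1)
    (ν : ℕ → Fin d)
    (M : (Fin d → ℂ) → ℕ → Matrix (Fin 2) (Fin 2) ℂ)
    (hM0 : ∀ z, M z 0 = !![1, 1; -1, 1])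
    (hM : ∀ z n, 1 ≤ n → M z n = !![z (ν n), r n * z (ν n); (starRingEnd ℂ) (r n), 1])
    (P : (Fin d → ℂ) → ℕ → Matrix (Fin 2) (Fin 2) ℂ)
    (hP : ∀ z n, P z n = ((List.range (n + 1)).map (M z)).prod)
    (n : ℕ) (z : Fin d → ℂ) (hz : ∀ j, ‖z j‖ = 1) :
    1 - (‖(P z n 0 1 - P z n 1 1) / (P z n 0 1 + P z n 1 1)‖) ^ 2
      = (‖
          ((2 * ((∏ k ∈ Finset.Icc 1 n, Real.sqrt (1 - (‖r k‖) ^ 2) : ℝ) : ℂ))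
            / (P z n 0 1 + P z n 1 1))‖) ^ 2 := by
  have hstep (m : ℕ) : P z (m + 1) = P z m * M z (m + 1) := by
    rw [hP, hP, List.range_succ, List.map_append, List.prod_append, List.map_singleton,
      List.prod_singleton]
  have hform := conjTranspose_mul_mul_eq_prod_Icc_smul (K := !![0, 2; 2, 0])
    (c := fun k => ((1 - ‖r k‖ ^ 2 : ℝ) : ℂ))
    (by rw [hP, List.range_one, List.map_singleton, List.prod_singleton, hM0]
        exact conjTranspose_mul_polarization_mul_initial)
    (fun m hm => by rw [hM z m hm]; exact conjTranspose_mul_signature_mul_transfer (hz _)) hstep n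
  have hnorm : ‖P z n 0 1 + P z n 1 1‖ ^ 2 - ‖P z n 0 1 - P z n 1 1‖ ^ 2
      = 4 * ∏ k ∈ Icc 1 n, (1 - ‖r k‖ ^ 2) := by
    have hentry := congrFun (congrFun hform 1) 1
    rw [conjTranspose_mul_polarization_mul_apply_one_one] at hentry
    simp only [Matrix.smul_apply, smul_eq_mul, of_apply, cons_val_one, cons_val_zero,
      mul_one] at hentry
    exact_mod_cast hentry
  have hpos (k : ℕ) : 0 < 1 - ‖r k‖ ^ 2 := by nlinarith [hr k, norm_nonneg (r k)]
  have hsq : (∏ k ∈ Icc 1 n, √(1 - ‖r k‖ ^ 2)) ^ 2 = ∏ k ∈ Icc 1 n, (1 - ‖r k‖ ^ 2) := by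
    rw [← prod_pow]
    exact prod_congr rfl fun k _ => Real.sq_sqrt (hpos k).le
  apply one_sub_norm_div_sq_eq
  · rw [hnorm, norm_mul, norm_real,
      Real.norm_of_nonneg (prod_nonneg fun k _ => Real.sqrt_nonneg _), mul_pow, hsq]
    norm_num
  · exact mul_ne_zero two_ne_zero
      (ofReal_ne_zero.mpr (prod_pos fun k _ => Real.sqrt_pos.mpr (hpos k)).ne')

/-- On the torus, `1 - |fₙ|² = |gₙ|²` where `fₙ = (Ψₙ* - Φₙ*)/(Ψₙ* + Φₙ*)` and
`gₙ = 2 ∏_{j=1}^n √(1-|r_j|²) / (Ψₙ* + Φₙ*)`. -/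
theorem transmission_identity (d : ℕ) (hd : 1 ≤ d)
    (r : ℕ → ℂ) (hr : ∀ n, ‖r n‖ < 1)
    (ν : ℕ → Fin d)
    (M : (Fin d → ℂ) → ℕ → Matrix (Fin 2) (Fin 2) ℂ)
    (hM0 : ∀ z, M z 0 = !![1, 1; -1, 1])
    (hM : ∀ z n, 1 ≤ n → M z n = !![z (ν n), r n * z (ν n); (starRingEnd ℂ) (r n), 1])
    (P : (Fin d → ℂ) → ℕ → Matrix (Fin 2) (Fin 2) ℂ)
    (hP : ∀ z n, P z n = ((List.range (n + 1)).map (M z)).prod)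
    (n : ℕ) (hn : 1 ≤ n) (z : Fin d → ℂ) (hz : ∀ j, ‖z j‖ = 1) :
    1 - (‖(P z n 0 1 - P z n 1 1) / (P z n 0 1 + P z n 1 1)‖) ^ 2
      = (‖
          ((2 * ((∏ k ∈ Finset.Icc 1 n, Real.sqrt (1 - (‖r k‖) ^ 2) : ℝ) : ℂ))
            / (P z n 0 1 + P z n 1 1))‖) ^ 2 :=
  transmission_identity_general d r hr ν M hM0 hM P hP n z hz
end

section
/- Let h : 𝔻 → closure(𝔻) be holomorphic with h(0) = 0. Then the mean over the unit circle of log|1 + h°| equals 0, where h° denotes the radial boundary limit; equivalently, for h bounded holomorphic on the disk with h(0)=0, the function 1+h is outer and ∫_𝕋 log|1+h°| dτ = log|1+h(0)| = 0. -/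
/-!
For `δ > 0` the function `1 + h + δ` is holomorphic on the disk with real part at least `δ`, so
`log ‖1 + h + δ‖` is harmonic and bounded there. The mean value property on the circles of radius
`s < 1` and dominated convergence as `s → 1⁻` give `∫ log ‖1 + h° + δ‖ = 2π log (1 + δ)`.
As `δ ↓ 0` these integrands decrease to `log ‖1 + h°‖`, because `Re (1 + h°) ≥ 0`, while their
integrals stay bounded below. Monotone convergence (Beppo Levi) then shows that `1 + h° ≠ 0` a.e.,
that `log ‖1 + h°‖` is integrable, and that its integral is `lim 2π log (1 + δ) = 0`.
-/

open Complex Real MeasureTheory Filter Set Metric Topology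

section BeppoLevi

variable {α : Type*} [MeasurableSpace α] {μ : Measure α} {f : ℕ → α → ℝ}

theorem lintegral_iSup_ofReal_sub_lt_top_of_antitone (hf : ∀ n, Integrable (f n) μ)
    (h_mono : ∀ᵐ x ∂μ, Antitone fun n ↦ f n x) (h_bdd : BddBelow (range fun n ↦ ∫ x, f n x ∂μ)) :
    ∫⁻ x, ⨆ n, ENNReal.ofReal (f 0 x - f n x) ∂μ < ⊤ := by
  obtain ⟨B, hB⟩ := h_bdd
  have h_nonneg (n : ℕ) : 0 ≤ᵐ[μ] fun x ↦ f 0 x - f n x := by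
    filter_upwards [h_mono] with x hx using sub_nonneg.2 (hx (Nat.zero_le n))
  rw [lintegral_iSup' (f := fun n x ↦ ENNReal.ofReal (f 0 x - f n x))
    (fun n ↦ ((hf 0).sub (hf n)).aemeasurable.ennreal_ofReal)]
  · refine lt_of_le_of_lt (iSup_le fun n ↦ ?_) (ENNReal.ofReal_lt_top (r := ∫ x, f 0 x ∂μ - B))
    have hint : Integrable (fun x ↦ f 0 x - f n x) μ := (hf 0).sub (hf n)
    rw [← ofReal_integral_eq_lintegral_ofReal hint (h_nonneg n),
      integral_sub (hf 0) (hf n)]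
    exact ENNReal.ofReal_le_ofReal (by linarith [hB ⟨n, rfl⟩])
  · filter_upwards [h_mono] with x hx n m hnm
    exact ENNReal.ofReal_le_ofReal (by linarith [hx hnm])

theorem ae_bddBelow_of_antitone_of_bddBelow_integral (hf : ∀ n, Integrable (f n) μ)
    (h_mono : ∀ᵐ x ∂μ, Antitone fun n ↦ f n x) (h_bdd : BddBelow (range fun n ↦ ∫ x, f n x ∂μ)) :
    ∀ᵐ x ∂μ, BddBelow (range fun n ↦ f n x) := by
  have h_meas : AEMeasurable (fun x ↦ ⨆ n, ENNReal.ofReal (f 0 x - f n x)) μ :=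
    AEMeasurable.iSup fun n ↦ ((hf 0).sub (hf n)).aemeasurable.ennreal_ofReal
  filter_upwards [ae_lt_top' h_meas
    (lintegral_iSup_ofReal_sub_lt_top_of_antitone hf h_mono h_bdd).ne] with x hx
  refine ⟨f 0 x - (⨆ n, ENNReal.ofReal (f 0 x - f n x)).toReal, ?_⟩
  rintro _ ⟨n, rfl⟩
  have := (ENNReal.ofReal_le_iff_le_toReal hx.ne).1
    (le_iSup (fun n ↦ ENNReal.ofReal (f 0 x - f n x)) n)
  linarith

theorem integrable_of_tendsto_of_antitone {F : α → ℝ} (hf : ∀ n, Integrable (f n) μ)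
    (h_mono : ∀ᵐ x ∂μ, Antitone fun n ↦ f n x) (h_bdd : BddBelow (range fun n ↦ ∫ x, f n x ∂μ))
    (h_tendsto : ∀ᵐ x ∂μ, Tendsto (fun n ↦ f n x) atTop (𝓝 (F x))) :
    Integrable F μ := by
  have h_le : ∀ᵐ x ∂μ, F x ≤ f 0 x := by
    filter_upwards [h_mono, h_tendsto] with x hx hxF
    exact le_of_tendsto hxF (Eventually.of_forall fun n ↦ hx (Nat.zero_le n))
  suffices Integrable (fun x ↦ f 0 x - F x) μ from
    ((hf 0).sub this).congr (Eventually.of_forall fun x ↦ sub_sub_cancel (f 0 x) (F x))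
  refine ⟨(hf 0).aestronglyMeasurable.sub
    (aestronglyMeasurable_of_tendsto_ae atTop (fun n ↦ (hf n).aestronglyMeasurable) h_tendsto),
    (hasFiniteIntegral_iff_ofReal (h_le.mono fun x hx ↦ sub_nonneg.2 hx)).2 ?_⟩
  refine lt_of_le_of_lt (lintegral_mono_ae ?_)
    (lintegral_iSup_ofReal_sub_lt_top_of_antitone hf h_mono h_bdd)
  filter_upwards [h_tendsto] with x hx
  exact le_of_tendsto' ((ENNReal.continuous_ofReal.tendsto _).comp (tendsto_const_nhds.sub hx))
    fun n ↦ le_iSup (fun n ↦ ENNReal.ofReal (f 0 x - f n x)) n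

end BeppoLevi

theorem Complex.norm_add_ofReal_le_norm_add_ofReal {w : ℂ} {a b : ℝ} (hw : 0 ≤ w.re + a)
    (hab : a ≤ b) : ‖w + a‖ ≤ ‖w + b‖ := by
  rw [← sq_le_sq₀ (norm_nonneg _) (norm_nonneg _), Complex.sq_norm, Complex.sq_norm,
    normSq_apply, normSq_apply]
  simp only [add_re, ofReal_re, add_im, ofReal_im, add_zero]
  nlinarith

theorem integral_log_norm_eq_of_tendsto_integral_log_norm_add_ofReal {α : Type*}
    [MeasurableSpace α] {μ : Measure α} {w : α → ℂ} {L : ℝ} (hre : ∀ᵐ x ∂μ, 0 ≤ (w x).re)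
    (hint : ∀ δ : ℝ, 0 < δ → Integrable (fun x ↦ Real.log ‖w x + δ‖) μ)
    (hL : Tendsto (fun δ : ℝ ↦ ∫ x, Real.log ‖w x + δ‖ ∂μ) (𝓝[>] 0) (𝓝 L)) :
    ∫ x, Real.log ‖w x‖ ∂μ = L := by
  set δ : ℕ → ℝ := fun n ↦ 1 / (n + 1)
  have hδ_pos (n : ℕ) : 0 < δ n := by positivity
  have hδ_lim : Tendsto δ atTop (𝓝[>] 0) :=
    tendsto_nhdsWithin_iff.2 ⟨tendsto_one_div_add_atTop_nhds_zero_nat, .of_forall hδ_pos⟩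
  set f : ℕ → α → ℝ := fun n x ↦ Real.log ‖w x + δ n‖
  have hf_int (n : ℕ) : Integrable (f n) μ := hint _ (hδ_pos n)
  have hf_mono : ∀ᵐ x ∂μ, Antitone fun n ↦ f n x := by
    filter_upwards [hre] with x hx n m hnm
    have hpos : 0 < ‖w x + δ m‖ :=
      (hδ_pos m).trans_le ((by simpa using hx : δ m ≤ (w x + δ m).re).trans (re_le_norm _))
    exact Real.log_le_log hpos (norm_add_ofReal_le_norm_add_ofReal (by linarith [hδ_pos m])
      (one_div_le_one_div_of_le (by positivity) (by gcongr)))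
  have hf_bdd : BddBelow (range fun n ↦ ∫ x, f n x ∂μ) := (hL.comp hδ_lim).bddBelow_range
  have hw_ne : ∀ᵐ x ∂μ, w x ≠ 0 := by
    filter_upwards [ae_bddBelow_of_antitone_of_bddBelow_integral hf_int hf_mono hf_bdd]
      with x ⟨c, hc⟩ hx
    have h_atBot : Tendsto (fun n ↦ f n x) atTop atBot := by
      simpa [f, hx, Function.comp_def, abs_of_pos (hδ_pos _)] using
        tendsto_log_nhdsGT_zero.comp hδ_lim
    obtain ⟨n, hn⟩ := (h_atBot.eventually (eventually_lt_atBot c)).exists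
    exact hn.not_ge (hc ⟨n, rfl⟩)
  have hf_lim : ∀ᵐ x ∂μ, Tendsto (fun n ↦ f n x) atTop (𝓝 (Real.log ‖w x‖)) := by
    filter_upwards [hw_ne] with x hx
    have : Tendsto (fun n ↦ w x + δ n) atTop (𝓝 (w x)) := by
      simpa using tendsto_const_nhds.add
        ((continuous_ofReal.tendsto 0).comp (tendsto_nhdsWithin_iff.1 hδ_lim).1)
    exact (Real.continuousAt_log (norm_ne_zero_iff.2 hx)).tendsto.comp this.norm
  exact tendsto_nhds_unique (integral_tendsto_of_tendsto_of_antitone hf_int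
    (integrable_of_tendsto_of_antitone hf_int hf_mono hf_bdd hf_lim) hf_mono hf_lim)
    (hL.comp hδ_lim)

/-- `a` is the radial boundary value `k°(e^{iθ})`. -/
def HasRadialLimit (k : ℂ → ℂ) (θ : ℝ) (a : ℂ) : Prop :=
  Tendsto (fun s : ℝ ↦ k (s * exp (θ * I))) (𝓝[<] 1) (𝓝 a)

theorem ofReal_mul_exp_mem_ball {s : ℝ} (hs : |s| < 1) (θ : ℝ) :
    (s : ℂ) * exp (θ * I) ∈ ball (0 : ℂ) 1 := by
  simpa [← circleMap_zero] using hs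

theorem eventually_abs_lt_one_nhdsLT : ∀ᶠ s in 𝓝[<] (1 : ℝ), |s| < 1 :=
  Filter.mem_of_superset (Ioo_mem_nhdsLT (by norm_num : (-1 : ℝ) < 1)) fun _ hs ↦ abs_lt.2 hs

theorem HasRadialLimit.mem_of_isClosed {k : ℂ → ℂ} {θ : ℝ} {a : ℂ} {S : Set ℂ}
    (hlim : HasRadialLimit k θ a) (hS : IsClosed S) (hk : ∀ z ∈ ball (0 : ℂ) 1, k z ∈ S) :
    a ∈ S :=
  hS.mem_of_tendsto hlim (eventually_abs_lt_one_nhdsLT.mono fun _ hs ↦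
    hk _ (ofReal_mul_exp_mem_ball hs θ))

theorem continuous_comp_ofReal_mul_exp {k : ℂ → ℂ} (hk : ContinuousOn k (ball 0 1)) {s : ℝ}
    (hs : |s| < 1) : Continuous fun θ : ℝ ↦ k (s * exp (θ * I)) :=
  hk.comp_continuous (by fun_prop) (ofReal_mul_exp_mem_ball hs)

theorem aestronglyMeasurable_of_hasRadialLimit {k : ℂ → ℂ} {kstar : ℝ → ℂ} {μ : Measure ℝ}
    (hk : ContinuousOn k (ball 0 1)) (hlim : ∀ᵐ θ ∂μ, HasRadialLimit k θ (kstar θ)) :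
    AEStronglyMeasurable kstar μ := by
  obtain ⟨u, -, hu_mem, hu⟩ := exists_seq_strictMono_tendsto' (by norm_num : (0 : ℝ) < 1)
  have hu' : Tendsto u atTop (𝓝[<] 1) :=
    tendsto_nhdsWithin_of_tendsto_nhds_of_eventually_within _ hu (.of_forall fun n ↦ (hu_mem n).2)
  refine aestronglyMeasurable_of_tendsto_ae atTop (fun n ↦ ?_) (hlim.mono fun θ hθ ↦ hθ.comp hu')
  exact (continuous_comp_ofReal_mul_exp hk
    (abs_lt.2 ⟨by linarith [(hu_mem n).1], (hu_mem n).2⟩)).aestronglyMeasurable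

theorem setIntegral_log_norm_circle {k : ℂ → ℂ} {r : ℝ}
    (hk : AnalyticOnNhd ℂ k (closedBall 0 |r|)) (hne : ∀ z ∈ closedBall (0 : ℂ) |r|, k z ≠ 0) :
    ∫ θ in Ioc 0 (2 * π), Real.log ‖k (r * exp (θ * I))‖ = 2 * π * Real.log ‖k 0‖ := by
  have := hk.circleAverage_log_norm_of_ne_zero hne
  rw [circleAverage_def, intervalIntegral.integral_of_le two_pi_pos.le, smul_eq_mul,
    inv_mul_eq_iff_eq_mul₀ two_pi_pos.ne'] at this
  simpa [circleMap_zero] using this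

theorem setIntegral_log_norm_of_hasRadialLimit {k : ℂ → ℂ} {kstar : ℝ → ℂ} {δ M : ℝ}
    (hk : DifferentiableOn ℂ k (ball 0 1)) (hδ : 0 < δ) (hre : ∀ z ∈ ball (0 : ℂ) 1, δ ≤ (k z).re)
    (hM : ∀ z ∈ ball (0 : ℂ) 1, ‖k z‖ ≤ M)
    (hlim : ∀ᵐ θ ∂(volume.restrict (Ioc 0 (2 * π))), HasRadialLimit k θ (kstar θ)) :
    ∫ θ in Ioc 0 (2 * π), Real.log ‖kstar θ‖ = 2 * π * Real.log ‖k 0‖ := by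
  have hS : IsClosed {z : ℂ | δ ≤ z.re} := isClosed_le continuous_const continuous_re
  have hne {z : ℂ} (hz : δ ≤ z.re) : z ≠ 0 := fun h ↦ by simp [h] at hz; linarith
  have h_log_le {z : ℂ} (hz : δ ≤ z.re) (hzM : ‖z‖ ≤ M) :
      ‖Real.log ‖z‖‖ ≤ |Real.log δ| + |Real.log M| := by
    have hδz : δ ≤ ‖z‖ := hz.trans (re_le_norm z)
    rw [Real.norm_eq_abs, abs_le]
    constructor
    · linarith [Real.log_le_log hδ hδz, neg_abs_le (Real.log δ), abs_nonneg (Real.log M)]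
    · linarith [Real.log_le_log (hδ.trans_le hδz) hzM, le_abs_self (Real.log M),
        abs_nonneg (Real.log δ)]
  have h_circle : ∀ᶠ s : ℝ in 𝓝[<] 1,
      ∫ θ in Ioc 0 (2 * π), Real.log ‖k (s * exp (θ * I))‖ = 2 * π * Real.log ‖k 0‖ := by
    filter_upwards [eventually_abs_lt_one_nhdsLT] with s hs
    have hsub : closedBall (0 : ℂ) |s| ⊆ ball 0 1 := closedBall_subset_ball hs
    exact setIntegral_log_norm_circle ((hk.analyticOnNhd isOpen_ball).mono hsub)
      fun z hz ↦ hne (hre z (hsub hz))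
  have h_dct := tendsto_integral_filter_of_dominated_convergence (l := 𝓝[<] (1 : ℝ))
    (F := fun (s θ : ℝ) ↦ Real.log ‖k (s * exp (θ * I))‖) (fun _ ↦ |Real.log δ| + |Real.log M|)
    (eventually_abs_lt_one_nhdsLT.mono fun s hs ↦ ((continuous_comp_ofReal_mul_exp
      hk.continuousOn hs).norm.log fun θ ↦ norm_ne_zero_iff.2
        (hne (hre _ (ofReal_mul_exp_mem_ball hs θ)))).aestronglyMeasurable)
    (eventually_abs_lt_one_nhdsLT.mono fun s hs ↦ .of_forall fun θ ↦
      h_log_le (hre _ (ofReal_mul_exp_mem_ball hs θ)) (hM _ (ofReal_mul_exp_mem_ball hs θ)))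
    (integrable_const _)
    (hlim.mono fun θ hθ ↦ (Real.continuousAt_log (norm_ne_zero_iff.2
      (hne (hθ.mem_of_isClosed hS hre)))).tendsto.comp hθ.norm)
  exact tendsto_nhds_unique h_dct (tendsto_const_nhds.congr' (h_circle.mono fun _ h ↦ h.symm))

theorem Complex.re_one_add_nonneg {z : ℂ} (hz : ‖z‖ ≤ 1) : 0 ≤ (1 + z).re := by
  have := neg_le_of_abs_le ((abs_re_le_norm z).trans hz)
  simp only [add_re, one_re]
  linarith

theorem Complex.le_norm_one_add_add_ofReal {z : ℂ} (hz : ‖z‖ ≤ 1) (δ : ℝ) :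
    δ ≤ ‖1 + z + δ‖ :=
  le_trans (by simpa using re_one_add_nonneg hz) (re_le_norm _)

theorem Complex.norm_one_add_add_ofReal_le {z : ℂ} (hz : ‖z‖ ≤ 1) {δ : ℝ} (hδ : 0 ≤ δ) :
    ‖1 + z + δ‖ ≤ 2 + δ := by
  refine norm_add₃_le.trans ?_
  rw [norm_one, norm_real, Real.norm_of_nonneg hδ]
  linarith

theorem integrable_log_norm_one_add_add_ofReal {α : Type*} [MeasurableSpace α] {μ : Measure α}
    [IsFiniteMeasure μ] {g : α → ℂ} (hg : AEStronglyMeasurable g μ) (hg_le : ∀ᵐ x ∂μ, ‖g x‖ ≤ 1)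
    {δ : ℝ} (hδ : 0 < δ) : Integrable (fun x ↦ Real.log ‖1 + g x + δ‖) μ := by
  refine integrable_of_le_of_le (g₁ := fun _ ↦ Real.log δ) (g₂ := fun _ ↦ Real.log (2 + δ))
    ((hg.const_add 1).add_const _).norm.aemeasurable.log.aestronglyMeasurable ?_ ?_
    (integrable_const _) (integrable_const _)
  · filter_upwards [hg_le] with x hx
    exact Real.log_le_log hδ (le_norm_one_add_add_ofReal hx δ)
  · filter_upwards [hg_le] with x hx
    exact Real.log_le_log (hδ.trans_le (le_norm_one_add_add_ofReal hx δ))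
      (norm_one_add_add_ofReal_le hx hδ.le)

theorem setIntegral_log_norm_one_add_add_ofReal_of_hasRadialLimit {h : ℂ → ℂ} {hstar : ℝ → ℂ}
    (hh : DifferentiableOn ℂ h (ball 0 1)) (hb : ∀ z ∈ ball (0 : ℂ) 1, ‖h z‖ ≤ 1) (h0 : h 0 = 0)
    (hlim : ∀ᵐ θ ∂(volume.restrict (Ioc 0 (2 * π))), HasRadialLimit h θ (hstar θ))
    {δ : ℝ} (hδ : 0 < δ) :
    ∫ θ in Ioc 0 (2 * π), Real.log ‖1 + hstar θ + δ‖ = 2 * π * Real.log (1 + δ) := by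
  have := setIntegral_log_norm_of_hasRadialLimit (k := fun z ↦ 1 + h z + δ) (M := 2 + δ)
    ((hh.const_add 1).add_const _) hδ
    (fun z hz ↦ by simpa using re_one_add_nonneg (hb z hz))
    (fun z hz ↦ norm_one_add_add_ofReal_le (hb z hz) hδ.le)
    (hlim.mono fun θ hθ ↦ (hθ.const_add 1).add_const _)
  rwa [h0, add_zero, ← ofReal_one, ← ofReal_add, norm_real, Real.norm_of_nonneg (by linarith),
    ofReal_one] at this

/-- If `h` is holomorphic on the unit disk with values in the closed unit disk and `h(0) = 0`,
then the mean over the unit circle of `log|1 + h°|` vanishes, where `h°` is the radial boundary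
limit (which exists almost everywhere by Fatou's theorem). -/
theorem log_outer_mean_zero (h : ℂ → ℂ)
    (hh : DifferentiableOn ℂ h (Metric.ball (0 : ℂ) 1))
    (hb : ∀ z ∈ Metric.ball (0 : ℂ) 1, ‖h z‖ ≤ 1)
    (h0 : h 0 = 0)
    (hstar : ℝ → ℂ)
    (hlim : ∀ᵐ (θ : ℝ) ∂(volume.restrict (Set.Ioc (0 : ℝ) (2 * π))),
      Tendsto (fun s : ℝ => h ((s : ℂ) * Complex.exp ((θ : ℂ) * Complex.I)))
        (nhdsWithin 1 (Set.Iio 1)) (nhds (hstar θ))) :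
    (1 / (2 * π)) * ∫ θ in Set.Ioc (0 : ℝ) (2 * π),
        Real.log (‖1 + hstar θ‖) = 0 := by
  have hstar_le : ∀ᵐ θ ∂(volume.restrict (Ioc 0 (2 * π))), ‖hstar θ‖ ≤ 1 :=
    hlim.mono fun θ hθ ↦ mem_closedBall_zero_iff.1 <| HasRadialLimit.mem_of_isClosed hθ
      isClosed_closedBall fun z hz ↦ mem_closedBall_zero_iff.2 (hb z hz)
  have h_lim : Tendsto (fun δ : ℝ ↦ 2 * π * Real.log (1 + δ)) (𝓝[>] 0) (𝓝 0) := by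
    have : ContinuousAt (fun δ : ℝ ↦ 2 * π * Real.log (1 + δ)) 0 := by
      fun_prop (disch := norm_num)
    simpa using this.tendsto.mono_left nhdsWithin_le_nhds
  rw [integral_log_norm_eq_of_tendsto_integral_log_norm_add_ofReal
    (hstar_le.mono fun θ ↦ re_one_add_nonneg)
    (fun δ hδ ↦ integrable_log_norm_one_add_add_ofReal
      (aestronglyMeasurable_of_hasRadialLimit hh.continuousOn hlim) hstar_le hδ)
    (h_lim.congr' ?_), mul_zero]
  filter_upwards [self_mem_nhdsWithin] with δ hδ
  exact (setIntegral_log_norm_one_add_add_ofReal_of_hasRadialLimit hh hb h0 hlim hδ).symm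
end

section
/- Let g : 𝕋^d → ℂ be continuous and let η ∈ ℝ^d have strictly positive entries that are linearly independent over ℚ. Then lim_{L→∞} (1/(2L)) ∫_{-L}^{L} g(e^{iη₁ω},...,e^{iη_dω}) dω = ∫_{𝕋^d} g dτ. -/
/-!
The time averages `f ↦ (2L)⁻¹ ∫_{-L}^{L} f (ℓ_η ω) dω` are continuous linear functionals on
`C(𝕋^d, ℂ)` of norm at most one, so the functions whose time averages converge to the space
average form a closed subspace. It contains every character `z ↦ ∏ z_j ^ n_j`: for `n = 0` both
averages are `1`; for `n ≠ 0` the space average vanishes, and along the line the character is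
`ω ↦ exp (i ⟨n, η⟩ ω)` with `⟨n, η⟩ ≠ 0` by rational independence, so its time averages are
`O(1/L)`. By Stone–Weierstrass the characters span a dense subspace.
-/

open Complex Real MeasureTheory Filter Topology Set

theorem ContinuousLinearMap.tendsto_apply_of_dense_span {ι 𝕜 E F : Type*}
    [NontriviallyNormedField 𝕜] [SeminormedAddCommGroup E] [NormedSpace 𝕜 E]
    [SeminormedAddCommGroup F] [NormedSpace 𝕜 F] {l : Filter ι} {A : ι → E →L[𝕜] F}
    {B : E →L[𝕜] F} {C : ℝ} (hA : ∀ i, ‖A i‖ ≤ C) {s : Set E}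
    (hs : (Submodule.span 𝕜 s).topologicalClosure = ⊤)
    (h : ∀ x ∈ s, Tendsto (fun i => A i x) l (𝓝 (B x))) (x : E) :
    Tendsto (fun i => A i x) l (𝓝 (B x)) := by
  let S : Submodule 𝕜 E :=
    { carrier := {x | Tendsto (fun i => A i x) l (𝓝 (B x))}
      add_mem' := fun hx hy => by simpa using hx.add hy
      zero_mem' := by simpa using tendsto_const_nhds
      smul_mem' := fun c x hx => by simpa using hx.const_smul c }
  have hequi : Equicontinuous ((↑) ∘ A : ι → E → F) :=
    ((NormedSpace.equicontinuous_TFAE A).out 5 1).mp (⟨C, hA⟩ : ∃ C, ∀ i, ‖A i‖ ≤ C)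
  have hS : (Submodule.span 𝕜 s).topologicalClosure ≤ S :=
    Submodule.topologicalClosure_minimal _ (Submodule.span_le.mpr h)
      (hequi.isClosed_setOfPred_tendsto B.continuous)
  exact hS (hs ▸ Submodule.mem_top)

namespace ContinuousMap

variable {α X : Type*} [MeasurableSpace α] [TopologicalSpace α] [OpensMeasurableSpace α]
  [TopologicalSpace X] [CompactSpace X] (μ : Measure α) [IsFiniteMeasure μ] (φ : C(α, X))

theorem integrable_comp (f : C(X, ℂ)) : Integrable (fun a => f (φ a)) μ :=
  .of_bound (f.comp φ).continuous.aestronglyMeasurable ‖f‖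
    (ae_of_all _ fun a => f.norm_coe_le_norm (φ a))

noncomputable def integralCompCLM : C(X, ℂ) →L[ℂ] ℂ :=
  LinearMap.mkContinuous
    { toFun := fun f => ∫ a, f (φ a) ∂μ
      map_add' := fun f g => integral_add (integrable_comp μ φ f) (integrable_comp μ φ g)
      map_smul' := fun c f => integral_smul c _ }
    (μ.real univ) fun f => by
      simpa [mul_comm] using
        norm_integral_le_of_norm_le_const (ae_of_all μ fun a => f.norm_coe_le_norm (φ a))

theorem norm_integralCompCLM_le : ‖integralCompCLM μ φ‖ ≤ μ.real univ :=
  LinearMap.mkContinuous_norm_le _ measureReal_nonneg _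

end ContinuousMap

theorem norm_integral_exp_mul_I_le {c : ℝ} (hc : c ≠ 0) (a b : ℝ) :
    ‖∫ ω in a..b, exp (c * ω * I)‖ ≤ 2 / |c| := by
  have hcI : (c : ℂ) * I ≠ 0 := mul_ne_zero (ofReal_ne_zero.mpr hc) I_ne_zero
  have hunit (x : ℝ) : ‖exp (c * I * x)‖ = 1 := by
    rw [mul_right_comm, ← ofReal_mul, norm_exp_ofReal_mul_I]
  simp_rw [mul_right_comm _ _ I]
  rw [integral_exp_mul_complex hcI, norm_div, norm_mul, norm_I, mul_one, norm_real,
    Real.norm_eq_abs]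
  gcongr
  calc _ ≤ ‖exp (c * I * b)‖ + ‖exp (c * I * a)‖ := norm_sub_le _ _
    _ = 2 := by rw [hunit, hunit]; norm_num

theorem integral_exp_int_mul_I (m : ℤ) :
    ∫ t in (0 : ℝ)..2 * π, exp (m * t * I) = if m = 0 then ((2 * π : ℝ) : ℂ) else 0 := by
  split_ifs with hm
  · simp [hm]
  · have hmI : (m : ℂ) * I ≠ 0 := mul_ne_zero (Int.cast_ne_zero.mpr hm) I_ne_zero
    simp_rw [mul_right_comm _ _ I]
    rw [integral_exp_mul_complex hmI]
    have : exp (m * I * (2 * π)) = 1 := by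
      rw [← exp_int_mul_two_pi_mul_I m]; ring_nf
    simp [this]

theorem tendsto_average_exp_mul_I {c : ℝ} (hc : c ≠ 0) :
    Tendsto (fun L : ℝ => (1 / (2 * L) : ℝ) • ∫ ω in Ioc (-L) L, exp (c * ω * I)) atTop (𝓝 0) := by
  have hlim : Tendsto (fun L : ℝ => L⁻¹ * |c|⁻¹) atTop (𝓝 0) := by
    simpa using tendsto_inv_atTop_zero.mul_const |c|⁻¹
  refine squeeze_zero_norm' ?_ hlim
  filter_upwards [eventually_gt_atTop 0] with L hL
  rw [← intervalIntegral.integral_of_le (by linarith), norm_smul,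
    Real.norm_of_nonneg (by positivity)]
  calc 1 / (2 * L) * ‖∫ ω in -L..L, exp (c * ω * I)‖ ≤ 1 / (2 * L) * (2 / |c|) := by
        gcongr; exact norm_integral_exp_mul_I_le hc _ _
    _ = L⁻¹ * |c|⁻¹ := by field_simp

theorem LinearIndependent.sum_intCast_mul_ne_zero {ι : Type*} [Fintype ι] {η : ι → ℝ}
    (h : LinearIndependent ℚ η) {n : ι → ℤ} (hn : n ≠ 0) : ∑ i, (n i : ℝ) * η i ≠ 0 := by
  contrapose! hn
  funext i
  exact Fintype.linearIndependent_iff.mp (h.restrict_scalars' ℤ) n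
    (by simpa only [zsmul_eq_mul] using hn) i

namespace UnitAddTorus

variable {ι : Type*}

noncomputable def toComplex : C(UnitAddTorus ι, ι → ℂ) :=
  ⟨fun x i => AddCircle.toCircle (x i), by fun_prop⟩

theorem norm_toComplex_apply (x : UnitAddTorus ι) (i : ι) : ‖toComplex x i‖ = 1 :=
  Circle.norm_coe _

noncomputable def ofAngles : C(ι → ℝ, UnitAddTorus ι) :=
  ⟨fun θ i => ((θ i / (2 * π) : ℝ) : UnitAddCircle), by fun_prop⟩

theorem toComplex_ofAngles (θ : ι → ℝ) : toComplex (ofAngles θ) = fun i => exp (θ i * I) := by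
  funext i
  simp only [toComplex, ofAngles, ContinuousMap.coe_mk, AddCircle.toCircle_apply_mk,
    Circle.coe_exp]
  congr 1
  push_cast
  field_simp

theorem mFourier_ofAngles [Fintype ι] (n : ι → ℤ) (θ : ι → ℝ) :
    mFourier n (ofAngles θ) = ∏ i, exp (n i * θ i * I) := by
  simp only [mFourier, ofAngles, ContinuousMap.coe_mk, fourier_coe_apply]
  congr! 2 with i
  push_cast
  field_simp

noncomputable def line (η : ι → ℝ) : C(ℝ, UnitAddTorus ι) :=
  ofAngles.comp ⟨fun ω i => η i * ω, by fun_prop⟩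

theorem mFourier_line [Fintype ι] (η : ι → ℝ) (n : ι → ℤ) (ω : ℝ) :
    mFourier n (line η ω) = exp ((∑ i, n i * η i : ℝ) * ω * I) := by
  rw [line, ContinuousMap.comp_apply, mFourier_ofAngles, ← Complex.exp_sum]
  congr 1
  push_cast
  rw [Finset.sum_mul, Finset.sum_mul]
  exact Finset.sum_congr rfl fun i _ => by simp only [ContinuousMap.coe_mk]; push_cast; ring

noncomputable def lineAverage (η : ι → ℝ) (L : ℝ) : C(UnitAddTorus ι, ℂ) →L[ℂ] ℂ :=
  ((1 / (2 * L) : ℝ) : ℂ) • ContinuousMap.integralCompCLM (volume.restrict (Ioc (-L) L)) (line η)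

theorem lineAverage_apply (η : ι → ℝ) (L : ℝ) (f : C(UnitAddTorus ι, ℂ)) :
    lineAverage η L f = (1 / (2 * L) : ℝ) • ∫ ω in Ioc (-L) L, f (line η ω) :=
  Complex.coe_smul _ _

theorem norm_lineAverage_le (η : ι → ℝ) (L : ℝ) : ‖lineAverage η L‖ ≤ 1 := by
  refine (ContinuousLinearMap.opNorm_smul_le _ _).trans ?_
  calc _ ≤ ‖((1 / (2 * L) : ℝ) : ℂ)‖ * max (L - -L) 0 := by
        gcongr
        simpa [Real.volume_real_Ioc] using
          ContinuousMap.norm_integralCompCLM_le (volume.restrict (Ioc (-L) L)) (line η)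
    _ ≤ 1 := by
      rcases le_or_gt L 0 with hL | hL
      · rw [max_eq_right (by linarith), mul_zero]; exact zero_le_one
      · rw [max_eq_left (by linarith), norm_real, Real.norm_of_nonneg (by positivity)]
        field_simp
        norm_num

section Fintype

variable [Fintype ι]

theorem tendsto_lineAverage_mFourier {η : ι → ℝ} (hη : LinearIndependent ℚ η) (n : ι → ℤ) :
    Tendsto (fun L => lineAverage η L (mFourier n)) atTop (𝓝 (if n = 0 then 1 else 0)) := by
  split_ifs with hn
  · refine tendsto_const_nhds.congr' ?_
    filter_upwards [eventually_gt_atTop 0] with L hL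
    rw [lineAverage_apply, hn, mFourier_zero]
    simp only [ContinuousMap.one_apply, integral_const, smul_smul, measureReal_restrict_apply_univ,
      Real.volume_real_Ioc_of_le (show -L ≤ L by linarith)]
    rw [real_smul, mul_one, ← ofReal_one]
    congr 1
    field_simp
    ring
  · simp_rw [lineAverage_apply, mFourier_line]
    exact tendsto_average_exp_mul_I (hη.sum_intCast_mul_ne_zero hn)

instance : IsFiniteMeasure (volume.restrict (univ.pi fun _ : ι => Ioc (0 : ℝ) (2 * π))) := by
  rw [volume_pi, Measure.restrict_pi_pi]
  infer_instance

noncomputable def boxAverage : C(UnitAddTorus ι, ℂ) →L[ℂ] ℂ :=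
  ((1 / (2 * π) ^ Fintype.card ι : ℝ) : ℂ) •
    ContinuousMap.integralCompCLM (volume.restrict (univ.pi fun _ => Ioc 0 (2 * π))) ofAngles

theorem boxAverage_apply (f : C(UnitAddTorus ι, ℂ)) :
    boxAverage f = (1 / (2 * π) ^ Fintype.card ι : ℝ) •
      ∫ θ in univ.pi fun _ => Ioc 0 (2 * π), f (ofAngles θ) :=
  Complex.coe_smul _ _

theorem boxAverage_mFourier (n : ι → ℤ) : boxAverage (mFourier n) = if n = 0 then 1 else 0 := by
  have hint : ∫ θ in univ.pi fun _ => Ioc 0 (2 * π), mFourier n (ofAngles θ) =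
      ∏ i, if n i = 0 then ((2 * π : ℝ) : ℂ) else 0 := by
    simp_rw [mFourier_ofAngles, volume_pi, Measure.restrict_pi_pi]
    rw [integral_fintype_prod_eq_prod (fun i (t : ℝ) => exp (n i * t * I))]
    refine Finset.prod_congr rfl fun i _ => ?_
    rw [← integral_exp_int_mul_I, intervalIntegral.integral_of_le (by positivity)]
  rw [boxAverage_apply, hint]
  by_cases hn : n = 0
  · simp only [hn, Pi.zero_apply, if_true, Finset.prod_const, Finset.card_univ]
    rw [real_smul, ← ofReal_pow, ← ofReal_mul, one_div, inv_mul_cancel₀ (by positivity),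
      ofReal_one]
  · obtain ⟨i, hi⟩ := Function.ne_iff.mp hn
    rw [Finset.prod_eq_zero (Finset.mem_univ i) (if_neg hi), smul_zero, if_neg hn]

theorem tendsto_lineAverage {η : ι → ℝ} (hη : LinearIndependent ℚ η) (f : C(UnitAddTorus ι, ℂ)) :
    Tendsto (fun L => lineAverage η L f) atTop (𝓝 (boxAverage f)) :=
  ContinuousLinearMap.tendsto_apply_of_dense_span (norm_lineAverage_le η)
    span_mFourier_closure_eq_top
    (by rintro _ ⟨n, rfl⟩; rw [boxAverage_mFourier]; exact tendsto_lineAverage_mFourier hη n) f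

end Fintype

end UnitAddTorus

theorem torus_line_ergodic_average_general (d : ℕ)
    (g : (Fin d → ℂ) → ℂ)
    (hg : ContinuousOn g {z : Fin d → ℂ | ∀ j, ‖z j‖ = 1})
    (η : Fin d → ℝ) (hind : LinearIndependent ℚ η) :
    Tendsto (fun L : ℝ => (1 / (2 * L) : ℝ) •
        ∫ ω in (-L)..L, g (fun j => Complex.exp ((η j : ℂ) * (ω : ℂ) * Complex.I)))
      atTop
      (nhds ((1 / (2 * π) ^ d : ℝ) •
        ∫ θ : Fin d → ℝ in Set.univ.pi (fun _ => Set.Ioc (0 : ℝ) (2 * π)),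
          g (fun j => Complex.exp ((θ j : ℂ) * Complex.I)))) := by
  let G : C(UnitAddTorus (Fin d), ℂ) := ⟨g ∘ UnitAddTorus.toComplex,
    hg.comp_continuous UnitAddTorus.toComplex.continuous UnitAddTorus.norm_toComplex_apply⟩
  have hspace : UnitAddTorus.boxAverage G = (1 / (2 * π) ^ d : ℝ) •
      ∫ θ : Fin d → ℝ in Set.univ.pi (fun _ => Set.Ioc (0 : ℝ) (2 * π)),
        g (fun j => Complex.exp ((θ j : ℂ) * Complex.I)) := by
    simp [UnitAddTorus.boxAverage_apply, G, UnitAddTorus.toComplex_ofAngles]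
  rw [← hspace]
  refine (UnitAddTorus.tendsto_lineAverage hind G).congr' ?_
  filter_upwards [eventually_ge_atTop 0] with L hL
  rw [UnitAddTorus.lineAverage_apply, intervalIntegral.integral_of_le (by linarith)]
  simp [G, UnitAddTorus.line, UnitAddTorus.toComplex_ofAngles]

/-- Ergodic averaging along a dense torus line: if `g` is continuous on the `d`-torus and the
frequencies `η₁,…,η_d > 0` are linearly independent over `ℚ`, then the time averages of
`g ∘ ℓ_η` converge to the space average of `g`. -/
theorem torus_line_ergodic_average (d : ℕ) (hd : 1 ≤ d)
    (g : (Fin d → ℂ) → ℂ)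
    (hg : ContinuousOn g {z : Fin d → ℂ | ∀ j, ‖z j‖ = 1})
    (η : Fin d → ℝ) (hη : ∀ j, 0 < η j) (hind : LinearIndependent ℚ η) :
    Tendsto (fun L : ℝ => (1 / (2 * L) : ℝ) •
        ∫ ω in (-L)..L, g (fun j => Complex.exp ((η j : ℂ) * (ω : ℂ) * Complex.I)))
      atTop
      (nhds ((1 / (2 * π) ^ d : ℝ) •
        ∫ θ : Fin d → ℝ in Set.univ.pi (fun _ => Set.Ioc (0 : ℝ) (2 * π)),
          g (fun j => Complex.exp ((θ j : ℂ) * Complex.I)))) :=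
  torus_line_ergodic_average_general d g hg η hind
end

section
/- Let η ∈ ℝ^d have strictly positive entries and let D be the dimension over ℚ of the rational span of η₁,...,η_d. Then there exist q ∈ ℝ^D with strictly positive entries and multi-indices α₁,...,α_d ∈ ℤ_+^D such that η_ν = ⟨α_ν, q⟩ for every 1 ≤ ν ≤ d. -/
open Finset Filter Topology

/-!
Pick a `ℚ`-basis `e₁, …, e_D` of the span among the `ηⱼ` themselves, so the `e_k` are positive and
`ηⱼ = ∑ₖ cⱼₖ e_k` with rational, possibly negative, `cⱼₖ`. For a small rational `ε > 0` and a
rational vector `r` close to `e`, the coefficients `⟨cⱼ, r⟩ + ε cⱼₖ ≈ ηⱼ + ε cⱼₖ` are positive, and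
against them `ηⱼ` is reproduced by the weights `q_k = (e_k - S r_k) / ε`, `S = ∑ e / (ε + ∑ r)`,
which are close to `e_k / (ε + ∑ e) > 0`. Multiplying the coefficients by a common denominator
makes them natural numbers.
-/

theorem sum_mul_eq_sum_perturbed_mul {K κ : Type*} [Field K] [Fintype κ] (c e r : κ → K)
    {ε S : K} (hε : ε ≠ 0) (hS : S * (ε + ∑ k, r k) = ∑ k, e k) :
    ∑ k, c k * e k = ∑ k, ((∑ i, c i * r i) + ε * c k) * ((e k - S * r k) / ε) := by
  have hsum : ∑ k, (e k - S * r k) / ε = S := by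
    rw [← sum_div, sum_sub_distrib, ← mul_sum, ← hS]
    field_simp
    ring
  have hterm : ∀ k, ((∑ i, c i * r i) + ε * c k) * ((e k - S * r k) / ε) =
      (∑ i, c i * r i) * ((e k - S * r k) / ε) + (c k * e k - S * (c k * r k)) := by
    intro k
    field_simp
  rw [sum_congr rfl fun k _ => hterm k, sum_add_distrib, ← mul_sum, hsum, sum_sub_distrib,
    ← mul_sum]
  ring

theorem exists_rat_pos_forall_add_mul_pos {ι : Type*} [Finite ι] (a b : ι → ℝ)
    (ha : ∀ i, 0 < a i) : ∃ ε : ℚ, 0 < ε ∧ ∀ i, 0 < a i + ε * b i := by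
  have hcast : Tendsto (fun ε : ℚ => (ε : ℝ)) (𝓝[>] 0) (𝓝 0) :=
    (Rat.continuous_coe_real.tendsto' 0 0 Rat.cast_zero).mono_left nhdsWithin_le_nhds
  have hpos : ∀ i, ∀ᶠ ε : ℚ in 𝓝[>] 0, 0 < a i + ε * b i := fun i =>
    (tendsto_const_nhds.add (hcast.mul_const (b i))).eventually_const_lt (by simpa using ha i)
  exact (eventually_mem_nhdsWithin.and (eventually_all.2 hpos)).exists

theorem exists_rat_of_eventually_nhds {κ : Type*} {P : (κ → ℝ) → Prop} {x : κ → ℝ}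
    (h : ∀ᶠ y in 𝓝 x, P y) : ∃ r : κ → ℚ, P fun k => r k :=
  (DenseRange.piMap fun _ => Rat.denseRange_cast).mem_nhds h

theorem exists_pos_nat_mul_eq_natCast {ι : Type*} [Fintype ι] (x : ι → ℚ) (hx : ∀ i, 0 ≤ x i) :
    ∃ N : ℕ, 0 < N ∧ ∀ i, ∃ n : ℕ, (n : ℚ) = N * x i := by
  refine ⟨∏ i, (x i).den, prod_pos fun i _ => (x i).pos, fun i => ?_⟩
  obtain ⟨m, hm⟩ := dvd_prod_of_mem (fun i => (x i).den) (mem_univ i)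
  have hnum : ((x i).num.toNat : ℚ) = (x i).num := by
    exact_mod_cast Int.toNat_of_nonneg (Rat.num_nonneg.2 (hx i))
  refine ⟨(x i).num.toNat * m, ?_⟩
  rw [hm, Nat.cast_mul, Nat.cast_mul, hnum, ← Rat.mul_den_eq_num]
  ring

theorem exists_pos_weights_rat_pos_coeffs {ι κ : Type*} [Fintype ι] [Fintype κ] (e : κ → ℝ)
    (he : ∀ k, 0 < e k) (c : ι → κ → ℚ) (hc : ∀ j, 0 < ∑ k, (c j k : ℝ) * e k) :
    ∃ q : κ → ℝ, (∀ k, 0 < q k) ∧ ∃ A : ι → κ → ℚ, (∀ j k, 0 < A j k) ∧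
      ∀ j, ∑ k, (c j k : ℝ) * e k = ∑ k, (A j k : ℝ) * q k := by
  obtain ⟨ε, hε, hεc⟩ := exists_rat_pos_forall_add_mul_pos
    (fun jk : ι × κ => ∑ k, (c jk.1 k : ℝ) * e k) (fun jk => c jk.1 jk.2) (fun jk => hc jk.1)
  have hε' : (0 : ℝ) < ε := by exact_mod_cast hε
  set E := ∑ k, e k
  have hεE : 0 < ε + E := add_pos_of_pos_of_nonneg hε' (sum_nonneg fun k _ => (he k).le)
  have hnear : ∀ᶠ x in 𝓝 e, 0 < (ε : ℝ) + ∑ k, x k ∧ (∀ k, 0 < e k - E / (ε + ∑ i, x i) * x k) ∧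
      ∀ j k, 0 < ∑ i, (c j i : ℝ) * x i + (ε : ℝ) * c j k := by
    have hden : Continuous fun x : κ → ℝ => (ε : ℝ) + ∑ i, x i := by fun_prop
    refine ((hden.tendsto e).eventually_const_lt hεE).and
      ((eventually_all.2 fun k => ?_).and (eventually_all.2 fun j => eventually_all.2 fun k => ?_))
    · have hval : 0 < e k - E / (ε + E) * e k := by
        rw [show e k - E / (ε + E) * e k = e k * ε / (ε + E) by field_simp; ring]
        exact div_pos (mul_pos (he k) hε') hεE
      have hcont : ContinuousAt (fun x : κ → ℝ => e k - E / (ε + ∑ i, x i) * x k) e :=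
        continuousAt_const.sub ((continuousAt_const.div hden.continuousAt hεE.ne').mul
          (continuous_apply k).continuousAt)
      exact hcont.tendsto.eventually_const_lt hval
    · exact (Continuous.tendsto (by fun_prop) e).eventually_const_lt (hεc (j, k))
  obtain ⟨r, hr_pos, hq_pos, hA_pos⟩ := exists_rat_of_eventually_nhds hnear
  beta_reduce at hA_pos
  refine ⟨fun k => (e k - E / (ε + ∑ i, (r i : ℝ)) * r k) / ε, fun k => div_pos (hq_pos k) hε',
    fun j k => ∑ i, c j i * r i + ε * c j k, fun j k => by dsimp only; exact_mod_cast hA_pos j k,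
    fun j => ?_⟩
  push_cast
  exact sum_mul_eq_sum_perturbed_mul _ _ _ hε'.ne' (div_mul_cancel₀ _ hr_pos.ne')

theorem exists_pos_weights_nat_coeffs {ι κ : Type*} [Fintype ι] [Fintype κ] (e : κ → ℝ)
    (he : ∀ k, 0 < e k) (c : ι → κ → ℚ) (hc : ∀ j, 0 < ∑ k, (c j k : ℝ) * e k) :
    ∃ q : κ → ℝ, (∀ k, 0 < q k) ∧ ∃ α : ι → κ → ℕ,
      ∀ j, ∑ k, (c j k : ℝ) * e k = ∑ k, (α j k : ℝ) * q k := by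
  obtain ⟨q, hq, A, hA, hcA⟩ := exists_pos_weights_rat_pos_coeffs e he c hc
  obtain ⟨N, hN, hα⟩ := exists_pos_nat_mul_eq_natCast (fun jk : ι × κ => A jk.1 jk.2)
    fun jk => (hA jk.1 jk.2).le
  choose α hα using hα
  have hN' : (0 : ℝ) < N := by exact_mod_cast hN
  refine ⟨fun k => q k / N, fun k => div_pos (hq k) hN', fun j k => α (j, k), fun j => ?_⟩
  rw [hcA j]
  refine sum_congr rfl fun k _ => ?_
  have hαA : (α (j, k) : ℝ) = N * A j k := by exact_mod_cast congrArg ((↑) : ℚ → ℝ) (hα (j, k))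
  rw [hαA]
  field_simp

theorem positive_integer_combination_general (d : ℕ)
    (η : Fin d → ℝ) (hη : ∀ j, 0 < η j)
    (D : ℕ) (hD : D = Module.finrank ℚ (Submodule.span ℚ (Set.range η))) :
    ∃ q : Fin D → ℝ, (∀ k, 0 < q k) ∧
      ∃ α : Fin d → Fin D → ℕ, ∀ j : Fin d, η j = ∑ k, (α j k : ℝ) * q k := by
  subst hD
  have := Module.Finite.span_of_finite ℚ (Set.finite_range η)
  obtain ⟨e, he_mem, he_span, -⟩ := Submodule.exists_fun_fin_finrank_span_eq ℚ (Set.range η)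
  have he : ∀ k, 0 < e k := fun k => by
    obtain ⟨j, hj⟩ := he_mem k
    exact hj ▸ hη j
  have hcoord : ∀ j, ∃ c : _ → ℚ, ∑ k, (c k : ℝ) * e k = η j := fun j => by
    have hj : η j ∈ Submodule.span ℚ (Set.range e) := by
      rw [he_span]
      exact Submodule.subset_span (Set.mem_range_self j)
    simpa only [Rat.smul_def] using (Submodule.mem_span_range_iff_exists_fun ℚ).1 hj
  choose c hc using hcoord
  obtain ⟨q, hq, α, hα⟩ := exists_pos_weights_nat_coeffs e he c fun j => (hc j).symm ▸ hη j
  exact ⟨q, hq, α, fun j => (hc j).symm.trans (hα j)⟩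

/-- Positive reals `η₁,…,η_d` can be expressed as nonnegative-integer combinations of `D`
positive reals, where `D` is the dimension over `ℚ` of their rational span. -/
theorem positive_integer_combination (d : ℕ) (hd : 1 ≤ d)
    (η : Fin d → ℝ) (hη : ∀ j, 0 < η j)
    (D : ℕ) (hD : D = Module.finrank ℚ (Submodule.span ℚ (Set.range η))) :
    ∃ q : Fin D → ℝ, (∀ k, 0 < q k) ∧
      ∃ α : Fin d → Fin D → ℕ, ∀ j : Fin d, η j = ∑ k, (α j k : ℝ) * q k :=
  positive_integer_combination_general d η hη D hD
end
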